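/- arXiv:2106.02900 — 8 statements merged into one kernel-verified Lean document; each statement's English description precedes it below -/
import Mathlib

section
/- For every real a > 0, the function f(x) = (x + √(a·x) + 1)/(x − √(a·x)) is (strictly) decreasing on the interval (a, ∞). -/
/-- For every `a > 0`, the function `x ↦ (x + √(a·x) + 1)/(x − √(a·x))` is strictly
    decreasing on `(a, ∞)`. -/
theorem ratio_strictAntiOn (a : ℝ) (ha : 0 < a) :
    StrictAntiOn (fun x : ℝ => (x + Real.sqrt (a * x) + 1) / (x - Real.sqrt (a * x)))
      (Set.Ioi a) := by
  intro x hx y hy hxy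
  simp only [Set.mem_Ioi] at hx hy
  have hx0 : 0 < x := ha.trans hx
  have hy0 : 0 < y := ha.trans hy
  set sa := Real.sqrt a with hsa
  set sx := Real.sqrt x with hsx
  set sy := Real.sqrt y with hsy
  have hsa0 : 0 < sa := Real.sqrt_pos.2 ha
  have hsx0 : 0 < sx := Real.sqrt_pos.2 hx0
  have hsy0 : 0 < sy := Real.sqrt_pos.2 hy0
  have hsa2 : sa ^ 2 = a := Real.sq_sqrt ha.le
  have hsx2 : sx ^ 2 = x := Real.sq_sqrt hx0.le
  have hsy2 : sy ^ 2 = y := Real.sq_sqrt hy0.le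
  have hax : Real.sqrt (a * x) = sa * sx := Real.sqrt_mul ha.le x
  have hay : Real.sqrt (a * y) = sa * sy := Real.sqrt_mul ha.le y
  have h1 : sa < sx := Real.sqrt_lt_sqrt ha.le hx
  have h2 : sa < sy := Real.sqrt_lt_sqrt ha.le hy
  have h3 : sx < sy := Real.sqrt_lt_sqrt hx0.le hxy
  have hdx : 0 < x - Real.sqrt (a * x) := by
    rw [hax, ← hsx2]; nlinarith
  have hdy : 0 < y - Real.sqrt (a * y) := by
    rw [hay, ← hsy2]; nlinarith
  simp only
  rw [div_lt_div_iff₀ hdy hdx, hax, hay, ← hsx2, ← hsy2]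
  nlinarith [mul_pos (sub_pos.2 h3) (mul_pos hsa0 (mul_pos hsx0 hsy0)),
    mul_pos (sub_pos.2 h3) (sub_pos.2 h1), mul_pos (sub_pos.2 h3) hsy0,
    mul_pos (sub_pos.2 h3) (add_pos hsx0 hsy0)]
end

section
/- Let ε ∈ (0,1) and δ ∈ (0,1) be real numbers, set L = log(2/δ) and τ = 96·L/ε². Then for every real x ≥ τ/2, it holds that x > √(3·x·L) and (x + √(3·x·L) + 1)/(x − √(3·x·L)) ≤ exp(ε). -/
/-- Core real inequality in the small-batch regime of the privacy analysis:
    for `x ≥ τ/2` with `τ = 96·log(2/δ)/ε²`, we have `x > √(3·x·L)` and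
    `(x + √(3·x·L) + 1)/(x − √(3·x·L)) ≤ e^ε`. -/
theorem small_batch_ratio_bound
    (ε δ : ℝ) (hε : ε ∈ Set.Ioo (0:ℝ) 1) (hδ : δ ∈ Set.Ioo (0:ℝ) 1)
    (L τ : ℝ) (hL : L = Real.log (2 / δ)) (hτ : τ = 96 * L / ε ^ 2)
    (x : ℝ) (hx : τ / 2 ≤ x) :
    Real.sqrt (3 * x * L) < x ∧
    (x + Real.sqrt (3 * x * L) + 1) / (x - Real.sqrt (3 * x * L)) ≤ Real.exp ε := by
  obtain ⟨hε0, hε1⟩ := hε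
  obtain ⟨hδ0, hδ1⟩ := hδ
  have hε2 : 0 < ε ^ 2 := by positivity
  have hL1 : (1/2 : ℝ) < L := by
    have h2 : (2:ℝ) ≤ 2 / δ := by rw [le_div_iff₀ hδ0]; nlinarith
    have := Real.log_le_log (by norm_num) h2
    have hlog2 := Real.log_two_gt_d9
    rw [hL]; linarith
  have hx48 : 48 * L ≤ ε ^ 2 * x := by
    rw [hτ] at hx
    have := (div_le_iff₀ hε2).mp (by linarith : 96 * L / ε ^ 2 ≤ 2 * x)
    nlinarith
  have hx0 : 0 < x := by nlinarith
  have hεx : 24 ≤ ε * x := by nlinarith [mul_pos hε0 hx0]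
  set s := Real.sqrt (3 * x * L) with hs
  have hs0 : 0 ≤ s := Real.sqrt_nonneg _
  have hs_le : s ≤ x * ε / 4 := by
    have h1 : 3 * x * L ≤ (x * ε / 4) ^ 2 := by nlinarith
    calc s ≤ Real.sqrt ((x * ε / 4) ^ 2) := Real.sqrt_le_sqrt h1
    _ = x * ε / 4 := Real.sqrt_sq (by positivity)
  have hsx : s < x := by nlinarith
  refine ⟨hsx, ?_⟩
  have hpos : 0 < x - s := by linarith
  rw [div_le_iff₀ hpos]
  have hexp : ε + 1 ≤ Real.exp ε := Real.add_one_le_exp ε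
  nlinarith [mul_le_mul_of_nonneg_right hexp hpos.le]
end

section
/- Let ε ∈ (0,1) and δ ∈ (0,1) be real numbers, set L = log(2/δ) and τ = 96·L/ε². Then for every real m ≥ τ, it holds that τ/2 > √((3/2)·τ·L) and ((m − τ/2 + √((3/2)·τ·L) + 1)/(τ/2 − √((3/2)·τ·L)))·((τ/2)/(m − τ/2)) ≤ exp(ε). -/
/-- Core real inequality in the large-batch regime of the privacy analysis:
    for `m ≥ τ` with `τ = 96·log(2/δ)/ε²`, we have `τ/2 > √((3/2)·τ·L)` and
    `((m − τ/2 + √((3/2)·τ·L) + 1)/(τ/2 − √((3/2)·τ·L)))·((τ/2)/(m − τ/2)) ≤ e^ε`. -/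
theorem large_batch_ratio_bound
    (ε δ : ℝ) (hε : ε ∈ Set.Ioo (0:ℝ) 1) (hδ : δ ∈ Set.Ioo (0:ℝ) 1)
    (L τ : ℝ) (hL : L = Real.log (2 / δ)) (hτ : τ = 96 * L / ε ^ 2)
    (m : ℝ) (hm : τ ≤ m) :
    Real.sqrt (3 / 2 * τ * L) < τ / 2 ∧
    ((m - τ / 2 + Real.sqrt (3 / 2 * τ * L) + 1) / (τ / 2 - Real.sqrt (3 / 2 * τ * L))) *
      ((τ / 2) / (m - τ / 2)) ≤ Real.exp ε := by
  obtain ⟨hε0, hε1⟩ := hε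
  obtain ⟨hδ0, hδ1⟩ := hδ
  have hεne : ε ≠ 0 := ne_of_gt hε0
  have hlog2 : (0.6931 : ℝ) < Real.log 2 := by
    have := Real.log_two_gt_d9; linarith
  have hL2 : Real.log 2 ≤ L := by
    rw [hL]
    apply Real.log_le_log (by norm_num)
    rw [le_div_iff₀ hδ0]; linarith
  have hLpos : (0:ℝ) < L := by linarith
  have hS : Real.sqrt (3 / 2 * τ * L) = 12 * L / ε := by
    rw [show 3 / 2 * τ * L = (12 * L / ε) ^ 2 by rw [hτ]; field_simp; ring]
    exact Real.sqrt_sq (by positivity)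
  rw [hS]
  have hSτ : 12 * L / ε < τ / 2 := by
    rw [hτ, div_lt_div_iff₀ hε0 (by positivity : (0:ℝ) < 2)]
    rw [div_mul_eq_mul_div, lt_div_iff₀ (by positivity : (0:ℝ) < ε ^ 2)]
    nlinarith [mul_pos hLpos hε0, mul_pos (mul_pos hLpos hε0) (sub_pos.mpr hε1)]
  refine ⟨hSτ, ?_⟩
  have hτpos : 0 < τ := by rw [hτ]; positivity
  have hx : 0 < m - τ / 2 := by linarith
  have hb : 0 < τ / 2 - 12 * L / ε := by linarith
  rw [div_mul_div_comm, div_le_iff₀ (by positivity)]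
  have hexp : 1 + ε ≤ Real.exp ε := by
    have := Real.add_one_le_exp ε; linarith
  have key : (m - τ / 2 + 12 * L / ε + 1) * (τ / 2) ≤
      (1 + ε) * ((τ / 2 - 12 * L / ε) * (m - τ / 2)) := by
    have hτε : ε ^ 2 * τ = 96 * L := by rw [hτ]; field_simp
    have hSε : ε * (12 * L / ε) = 12 * L := by field_simp
    set S := 12 * L / ε with hSdef
    have hSpos : 0 < S := by positivity
    rw [← sub_nonneg]
    have hid : ε ^ 3 * ((1 + ε) * ((τ / 2 - S) * (m - τ / 2)) -
        (m - τ / 2 + S + 1) * (τ / 2)) =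
        36 * L * ε ^ 2 * (m - τ / 2) - 12 * L * ε ^ 3 * (m - τ / 2)
        - 576 * L ^ 2 - 48 * L * ε := by
      linear_combination (ε ^ 2 * (m - τ / 2) / 2 - 6 * L - ε / 2) * hτε +
        (-(ε ^ 2 * (m - τ / 2)) - ε ^ 3 * (m - τ / 2) - ε ^ 2 * τ / 2) * hSε
    have h12 : (1:ℝ) < 12 * L := by linarith
    have hxm : τ / 2 ≤ m - τ / 2 := by linarith
    have hc : 0 ≤ 12 * L * ε ^ 2 * (3 - ε) :=
      (mul_pos (by positivity : (0:ℝ) < 12 * L * ε ^ 2) (by linarith : (0:ℝ) < 3 - ε)).le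
    have hD3 : 0 ≤ ε ^ 3 * ((1 + ε) * ((τ / 2 - S) * (m - τ / 2)) -
        (m - τ / 2 + S + 1) * (τ / 2)) := by
      rw [hid]
      nlinarith [mul_le_mul_of_nonneg_left hxm hc, hτε,
        mul_pos (mul_pos hLpos hLpos) (sub_pos.mpr hε1),
        mul_pos hLpos (sub_pos.mpr hε1), mul_pos hLpos hLpos,
        mul_pos hLpos (by linarith : (0:ℝ) < 12 * L - 1)]
    by_contra hcon
    push_neg at hcon
    nlinarith [pow_pos hε0 3, hD3]
  calc (m - τ / 2 + 12 * L / ε + 1) * (τ / 2)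
      ≤ (1 + ε) * ((τ / 2 - 12 * L / ε) * (m - τ / 2)) := key
    _ ≤ Real.exp ε * ((τ / 2 - 12 * L / ε) * (m - τ / 2)) := by
        apply mul_le_mul_of_nonneg_right hexp (by positivity)
end

section
/- Let p and q be probability mass functions on ℕ, let ε ≥ 0 and δ ≥ 0 be real numbers, and let I ⊆ ℕ be a set with 0 ∉ I. Suppose Σ_{t ∉ I} p(t) ≤ δ and p(t) ≤ exp(ε)·q(t−1) for every t ∈ I. Then for every natural number k and every set F ⊆ ℕ: Σ_{t ∈ ℕ : k + t ∈ F} p(t) ≤ exp(ε)·Σ_{t ∈ ℕ : k + 1 + t ∈ F} q(t) + δ. -/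
/-- Generic (ε, δ)-indistinguishability step of the privacy proof: if the law `p` of the
    noise `B` puts mass at most `δ` outside a set `I` with `0 ∉ I`, and `p(t) ≤ e^ε·q(t−1)`
    on `I`, then the laws of `k + B` and `(k+1) + B′` are (ε, δ)-close on every event `F`. -/
theorem shift_indistinguishable
    (p q : ℕ → ℝ) (hp0 : ∀ t, 0 ≤ p t) (hq0 : ∀ t, 0 ≤ q t)
    (hp1 : ∑' t, p t = 1) (hq1 : ∑' t, q t = 1)
    (ε δ : ℝ) (hε : 0 ≤ ε) (hδ : 0 ≤ δ)
    (I : Set ℕ) (hI : 0 ∉ I)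
    (hout : ∑' t, Set.indicator Iᶜ p t ≤ δ)
    (hratio : ∀ t ∈ I, p t ≤ Real.exp ε * q (t - 1)) :
    ∀ (k : ℕ) (F : Set ℕ),
      (∑' t : ℕ, Set.indicator {t | k + t ∈ F} p t)
        ≤ Real.exp ε * (∑' t : ℕ, Set.indicator {t | k + 1 + t ∈ F} q t) + δ := by
  intro k F
  have hsp : Summable p := by
    by_contra h
    rw [tsum_eq_zero_of_not_summable h] at hp1
    norm_num at hp1
  have hsq : Summable q := by
    by_contra h
    rw [tsum_eq_zero_of_not_summable h] at hq1
    norm_num at hq1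
  set S : Set ℕ := {t | k + t ∈ F} with hS
  set T : Set ℕ := {s | k + 1 + s ∈ F} with hT
  set g : ℕ → ℝ := (S ∩ I).indicator p with hg
  have hg0 : ∀ t, 0 ≤ g t := fun t => Set.indicator_nonneg (fun x _ => hp0 x) t
  have hgle : ∀ t, g t ≤ p t := fun t => Set.indicator_le_self' (fun x _ => hp0 x) t
  have hsg : Summable g := Summable.of_nonneg_of_le hg0 hgle hsp
  have hsind : Summable (S.indicator p) :=
    Summable.of_nonneg_of_le (fun t => Set.indicator_nonneg (fun x _ => hp0 x) t)
      (fun t => Set.indicator_le_self' (fun x _ => hp0 x) t) hsp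
  have hsout : Summable (Iᶜ.indicator p) :=
    Summable.of_nonneg_of_le (fun t => Set.indicator_nonneg (fun x _ => hp0 x) t)
      (fun t => Set.indicator_le_self' (fun x _ => hp0 x) t) hsp
  have hsT : Summable (T.indicator q) :=
    Summable.of_nonneg_of_le (fun t => Set.indicator_nonneg (fun x _ => hq0 x) t)
      (fun t => Set.indicator_le_self' (fun x _ => hq0 x) t) hsq
  -- pointwise split
  have hsplit : ∀ t, S.indicator p t ≤ g t + Iᶜ.indicator p t := by
    intro t
    have hle : S.indicator p t ≤ p t := Set.indicator_le_self' (fun x _ => hp0 x) t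
    have hc : (0:ℝ) ≤ Iᶜ.indicator p t := Set.indicator_nonneg (fun x _ => hp0 x) t
    by_cases hti : t ∈ I
    · by_cases hts : t ∈ S
      · have hgv : g t = p t := Set.indicator_of_mem (Set.mem_inter hts hti) p
        linarith
      · rw [Set.indicator_of_notMem hts]
        linarith [hg0 t]
    · have hv : Iᶜ.indicator p t = p t := Set.indicator_of_mem (Set.mem_compl hti) p
      rw [hv]
      linarith [hg0 t]
  have h1 : (∑' t, S.indicator p t) ≤ (∑' t, g t) + (∑' t, Iᶜ.indicator p t) := by
    rw [← Summable.tsum_add hsg hsout]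
    exact Summable.tsum_le_tsum hsplit hsind (hsg.add hsout)
  -- bound ∑ g
  have hg_zero : g 0 = 0 := Set.indicator_of_notMem (fun h => hI h.2) p
  have hgshift : ∀ s : ℕ, g (s + 1) ≤ Real.exp ε * T.indicator q s := by
    intro s
    by_cases h : s + 1 ∈ S ∩ I
    · have hgv : g (s + 1) = p (s + 1) := Set.indicator_of_mem h p
      have hsT' : s ∈ T := by
        have : k + (s + 1) ∈ F := h.1
        simpa [hT, Set.mem_setOf_eq, Nat.add_comm, Nat.add_assoc, Nat.add_left_comm] using this
      have := hratio (s + 1) h.2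
      simp only [Nat.add_sub_cancel] at this
      rw [hgv, Set.indicator_of_mem hsT']
      exact this
    · have hz : g (s + 1) = 0 := Set.indicator_of_notMem h p
      rw [hz]
      exact mul_nonneg (Real.exp_pos ε).le (Set.indicator_nonneg (fun x _ => hq0 x) s)
  have h2 : (∑' t, g t) ≤ Real.exp ε * ∑' s, T.indicator q s := by
    rw [Summable.tsum_eq_zero_add hsg, hg_zero, zero_add, ← tsum_mul_left]
    exact Summable.tsum_le_tsum hgshift (by exact hsg.comp_injective (add_left_injective 1))
      (hsT.mul_left _)
  calc (∑' t, S.indicator p t) ≤ (∑' t, g t) + (∑' t, Iᶜ.indicator p t) := h1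
    _ ≤ Real.exp ε * (∑' s, T.indicator q s) + δ := add_le_add h2 hout
end

section
/- Let ε ∈ (0,1) and δ ∈ (0,1) be real numbers, set L = log(2/δ) and τ = 96·L/ε². Let m ≥ 1 be a natural number with m ≤ τ, set n = ⌈τ/m⌉·m and μ = n/2, and let B ~ Binomial(n, 1/2). Then for every natural number t with μ − √(3·μ·L) < t < μ + √(3·μ·L), it holds that exp(−ε)·P(B = t−1) ≤ P(B = t) ≤ exp(ε)·P(B = t−1). -/
/-- The probability mass function of the Binomial(n, p) distribution:
    `P(B = t) = C(n, t) · p^t · (1-p)^{n-t}`. -/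
noncomputable def binomPMF (n : ℕ) (p : ℝ) (t : ℕ) : ℝ :=
  (n.choose t : ℝ) * p ^ t * (1 - p) ^ (n - t)

/-- Auxiliary scalar inequality: the two-sided ratio bound. -/
lemma aux_ratio_bound (ε μ S T : ℝ) (hε0 : 0 < ε) (hε1 : ε < 1) (hμ0 : 0 < μ)
    (hεμ : 24 ≤ ε * μ) (hS0 : 0 ≤ S) (hSle : S ≤ ε * μ / 4)
    (hT1 : μ - S < T) (hT2 : T < μ + S) :
    Real.exp (-ε) * T ≤ 2 * μ - T + 1 ∧ 2 * μ - T + 1 ≤ Real.exp ε * T := by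
  have hexp : 1 + ε ≤ Real.exp ε := by nlinarith [Real.add_one_le_exp ε]
  have hE1 : Real.exp (-ε) * Real.exp ε = 1 := by rw [← Real.exp_add]; simp
  have hE0 : 0 < Real.exp (-ε) := Real.exp_pos _
  have hεS : ε * S ≤ S := by nlinarith
  have hT0 : 0 < T := by nlinarith
  have hineq : μ + S + 1 ≤ (1 + ε) * (μ - S) := by nlinarith
  constructor
  · have h1 : Real.exp (-ε) * (1 + ε) ≤ 1 := by
      nlinarith [mul_le_mul_of_nonneg_left hexp hE0.le]
    have h2 : μ + S ≤ (1 + ε) * (μ - S) := by linarith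
    have h3 : Real.exp (-ε) * (μ + S) ≤ μ - S := by
      nlinarith [mul_le_mul_of_nonneg_right h1 (show (0:ℝ) ≤ μ + S by nlinarith)]
    have h4 : Real.exp (-ε) * T ≤ Real.exp (-ε) * (μ + S) :=
      mul_le_mul_of_nonneg_left hT2.le hE0.le
    linarith
  · have h2 : (1 + ε) * (μ - S) ≤ (1 + ε) * T :=
      mul_le_mul_of_nonneg_left hT1.le (by linarith)
    have h3 : (1 + ε) * T ≤ Real.exp ε * T :=
      mul_le_mul_of_nonneg_right hexp hT0.le
    linarith

set_option maxHeartbeats 1600000 in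
/-- Two-sided likelihood-ratio bound in the small-batch regime (`m ≤ τ`): for the noise
    `B ~ Binomial(⌈τ/m⌉·m, 1/2)` and every `t` in the concentration interval
    `(μ − √(3μL), μ + √(3μL))`, `e^{-ε}·P(B = t−1) ≤ P(B = t) ≤ e^{ε}·P(B = t−1)`. -/
theorem small_batch_likelihood_ratio
    (ε δ : ℝ) (hε : ε ∈ Set.Ioo (0:ℝ) 1) (hδ : δ ∈ Set.Ioo (0:ℝ) 1)
    (L τ : ℝ) (hL : L = Real.log (2 / δ)) (hτ : τ = 96 * L / ε ^ 2)
    (m : ℕ) (hm : 1 ≤ m) (hmτ : (m : ℝ) ≤ τ)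
    (n : ℕ) (hn : n = ⌈τ / (m : ℝ)⌉₊ * m)
    (μ : ℝ) (hμ : μ = (n : ℝ) / 2)
    (t : ℕ) (ht1 : μ - Real.sqrt (3 * μ * L) < (t : ℝ))
    (ht2 : (t : ℝ) < μ + Real.sqrt (3 * μ * L)) :
    Real.exp (-ε) * binomPMF n (1/2) (t - 1) ≤ binomPMF n (1/2) t ∧
    binomPMF n (1/2) t ≤ Real.exp ε * binomPMF n (1/2) (t - 1) := by
  obtain ⟨hε0, hε1⟩ := hε
  obtain ⟨hδ0, hδ1⟩ := hδ
  set S := Real.sqrt (3 * μ * L) with hS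
  -- basic facts about L
  have hL2 : (1:ℝ)/2 ≤ L := by
    have h2 : (2:ℝ) ≤ 2 / δ := by
      rw [le_div_iff₀ hδ0]; nlinarith
    have := Real.log_le_log (by norm_num) h2
    have hlog2 : (1:ℝ)/2 ≤ Real.log 2 := by
      have := Real.log_two_gt_d9; linarith
    rw [hL]; linarith
  have hL0 : 0 < L := by linarith
  -- n ≥ τ
  have hm0 : (0:ℝ) < m := by exact_mod_cast hm
  have hτn : τ ≤ (n : ℝ) := by
    have hceil : τ / (m:ℝ) ≤ (⌈τ / (m:ℝ)⌉₊ : ℝ) := Nat.le_ceil _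
    have : τ / (m:ℝ) * m ≤ (⌈τ / (m:ℝ)⌉₊ : ℝ) * m :=
      mul_le_mul_of_nonneg_right hceil hm0.le
    rw [div_mul_cancel₀ _ (ne_of_gt hm0)] at this
    rw [hn]; push_cast; linarith
  -- μ ≥ 48 L / ε²  and derived bounds
  have hμ48 : 48 * L / ε ^ 2 ≤ μ := by
    rw [hμ, hτ] at *
    have h : 96 * L / ε ^ 2 ≤ (n:ℝ) := hτn
    have hε2 : (0:ℝ) < ε ^ 2 := by positivity
    rw [div_le_iff₀ hε2] at h ⊢
    linarith
  have h48 : 48 * L ≤ ε ^ 2 * μ := by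
    have hε2 : (0:ℝ) < ε ^ 2 := by positivity
    rw [div_le_iff₀ hε2] at hμ48
    linarith
  have hμ0 : 0 < μ := by nlinarith
  have hεμ : 24 ≤ ε * μ := by
    nlinarith [mul_nonneg (mul_nonneg hε0.le hμ0.le) (by linarith : (0:ℝ) ≤ 1 - ε)]
  -- S ≤ ε μ / 4
  have hS0 : 0 ≤ S := Real.sqrt_nonneg _
  have hSle : S ≤ ε * μ / 4 := by
    have keyS : 3 * μ * L ≤ (ε * μ / 4) ^ 2 := by nlinarith
    calc S ≤ Real.sqrt ((ε * μ / 4) ^ 2) := Real.sqrt_le_sqrt keyS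
    _ = ε * μ / 4 := Real.sqrt_sq (by positivity)
  -- the core scalar bound
  obtain ⟨A, B⟩ := aux_ratio_bound ε μ S (t:ℝ) hε0 hε1 hμ0 hεμ hS0 hSle ht1 ht2
  have hN : (n : ℝ) = 2 * μ := by rw [hμ]; ring
  rw [← hN] at A B
  -- positions of t
  have ht0 : (0:ℝ) < (t:ℝ) := by nlinarith
  have ht1' : 1 ≤ t := by
    by_contra h
    push_neg at h
    interval_cases t
    simp at ht0
  have htn : t ≤ n := by
    have h5 : (t:ℝ) < (n:ℝ) := by nlinarith
    exact_mod_cast h5.le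
  have ht1n : t - 1 ≤ n := by omega
  -- choose recurrence
  have e0 := Nat.choose_succ_right_eq n (t-1)
  have ht11 : t - 1 + 1 = t := by omega
  rw [ht11] at e0
  have key : (n.choose t : ℝ) * t = (n.choose (t-1) : ℝ) * ((n:ℝ) - (t:ℝ) + 1) := by
    have c0 : ((n.choose t * t : ℕ) : ℝ) = ((n.choose (t-1) * (n - (t-1)) : ℕ) : ℝ) := by
      rw [e0]
    rw [Nat.cast_mul, Nat.cast_mul, Nat.cast_sub ht1n, Nat.cast_sub ht1'] at c0
    push_cast at c0
    linarith
  -- positivity of chooses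
  have hCt : (0:ℝ) < (n.choose t : ℝ) := by exact_mod_cast Nat.choose_pos htn
  have hCt1 : (0:ℝ) < (n.choose (t-1) : ℝ) := by exact_mod_cast Nat.choose_pos ht1n
  -- rewrite pmfs
  have pmf_t : binomPMF n (1/2) t = (n.choose t : ℝ) * (1/2 : ℝ) ^ n := by
    unfold binomPMF
    rw [show (1:ℝ) - 1/2 = 1/2 by norm_num, mul_assoc, ← pow_add, Nat.add_sub_cancel' htn]
  have pmf_t1 : binomPMF n (1/2) (t-1) = (n.choose (t-1) : ℝ) * (1/2 : ℝ) ^ n := by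
    unfold binomPMF
    rw [show (1:ℝ) - 1/2 = 1/2 by norm_num, mul_assoc, ← pow_add, Nat.add_sub_cancel' ht1n]
  have hpow : (0:ℝ) < (1/2 : ℝ) ^ n := by positivity
  have hE0 : 0 < Real.exp (-ε) := Real.exp_pos _
  have hE0' : 0 < Real.exp ε := Real.exp_pos _
  constructor
  · rw [pmf_t, pmf_t1]
    have core : Real.exp (-ε) * (n.choose (t-1) : ℝ) ≤ (n.choose t : ℝ) := by
      have h5 : Real.exp (-ε) * (n.choose (t-1) : ℝ) * (t:ℝ) ≤ (n.choose t : ℝ) * (t:ℝ) := by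
        rw [key]
        calc Real.exp (-ε) * (n.choose (t-1) : ℝ) * (t:ℝ)
            = (n.choose (t-1) : ℝ) * (Real.exp (-ε) * (t:ℝ)) := by ring
        _ ≤ (n.choose (t-1) : ℝ) * ((n:ℝ) - (t:ℝ) + 1) :=
            mul_le_mul_of_nonneg_left A hCt1.le
      exact le_of_mul_le_mul_right h5 ht0
    calc Real.exp (-ε) * ((n.choose (t-1) : ℝ) * (1/2 : ℝ) ^ n)
        = (Real.exp (-ε) * (n.choose (t-1) : ℝ)) * (1/2 : ℝ) ^ n := by ring
    _ ≤ (n.choose t : ℝ) * (1/2 : ℝ) ^ n := mul_le_mul_of_nonneg_right core hpow.le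
  · rw [pmf_t, pmf_t1]
    have core : (n.choose t : ℝ) ≤ Real.exp ε * (n.choose (t-1) : ℝ) := by
      have h5 : (n.choose t : ℝ) * (t:ℝ) ≤ Real.exp ε * (n.choose (t-1) : ℝ) * (t:ℝ) := by
        rw [key]
        calc (n.choose (t-1) : ℝ) * ((n:ℝ) - (t:ℝ) + 1)
            ≤ (n.choose (t-1) : ℝ) * (Real.exp ε * (t:ℝ)) :=
            mul_le_mul_of_nonneg_left B hCt1.le
        _ = Real.exp ε * (n.choose (t-1) : ℝ) * (t:ℝ) := by ring
      exact le_of_mul_le_mul_right h5 ht0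
    calc (n.choose t : ℝ) * (1/2 : ℝ) ^ n
        ≤ (Real.exp ε * (n.choose (t-1) : ℝ)) * (1/2 : ℝ) ^ n :=
        mul_le_mul_of_nonneg_right core hpow.le
    _ = Real.exp ε * ((n.choose (t-1) : ℝ) * (1/2 : ℝ) ^ n) := by ring
end

section
/- Let ε ∈ (0,1) and δ ∈ (0,1) be real numbers, set L = log(2/δ) and τ = 96·L/ε². Let m be a natural number with m > τ, set μ = τ/2, and let B ~ Binomial(m, τ/(2m)). Then for every natural number t with μ − √(3·μ·L) < t < μ + √(3·μ·L), it holds that exp(−ε)·P(B = t−1) ≤ P(B = t) ≤ exp(ε)·P(B = t−1). -/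
lemma binomPMF_ratio (m k : ℕ) (hk : k < m) (p : ℝ) :
    binomPMF m p (k+1) * (((k:ℝ)+1) * (1 - p)) = binomPMF m p k * (((m : ℝ) - k) * p) := by
  unfold binomPMF
  have h1 : m.choose (k+1) * (k+1) = m.choose k * (m - k) := Nat.choose_succ_right_eq m k
  have hc : (m.choose (k+1) : ℝ) * ((k:ℝ)+1) = (m.choose k : ℝ) * ((m:ℝ) - k) := by
    have := congrArg (Nat.cast : ℕ → ℝ) h1
    push_cast [Nat.cast_sub hk.le] at this
    linarith
  have h2 : m - k = (m - (k+1)) + 1 := by omega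
  rw [h2]
  linear_combination (p ^ k * p * (1 - p) ^ (m - (k+1)) * (1 - p)) * hc

lemma lbr_core (ε μ M x : ℝ) (hε0 : 0 < ε) (hε1 : ε < 1) (hμ24 : 24 ≤ μ)
    (hεμ : 24 ≤ ε * μ) (hMμ : 2 * μ < M)
    (hx1 : μ - μ * ε / 4 < x) (hx2 : x < μ + μ * ε / 4) :
    (M - x + 1) * μ ≤ (1 + ε) * (x * (M - μ)) ∧
    x * (M - μ) ≤ (1 + ε) * ((M - x + 1) * μ) := by
  have hμ0 : (0:ℝ) < μ := by linarith
  constructor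
  · have s1 : (M - x + 1) * μ ≤ (M - μ + μ * ε / 4 + 1) * μ :=
      mul_le_mul_of_nonneg_right (by linarith) hμ0.le
    have h5 : ε / 2 * μ ≤ (3 * ε / 4 - ε ^ 2 / 4) * (M - μ) := by
      apply mul_le_mul (by nlinarith) (by linarith) hμ0.le (by nlinarith)
    have h5' : μ * (ε / 2 * μ) ≤ μ * ((3 * ε / 4 - ε ^ 2 / 4) * (M - μ)) :=
      mul_le_mul_of_nonneg_left h5 hμ0.le
    have h6 : (0:ℝ) ≤ μ * (ε * μ - 24) := mul_nonneg hμ0.le (by linarith)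
    have s2 : (M - μ + μ * ε / 4 + 1) * μ ≤ (1 + ε) * ((μ - μ * ε / 4) * (M - μ)) := by
      nlinarith [h5', h6]
    have s3 : (1 + ε) * ((μ - μ * ε / 4) * (M - μ)) ≤ (1 + ε) * (x * (M - μ)) := by
      apply mul_le_mul_of_nonneg_left _ (by linarith : (0:ℝ) ≤ 1 + ε)
      exact mul_le_mul_of_nonneg_right hx1.le (by linarith)
    linarith
  · have s1 : x * (M - μ) ≤ (μ + μ * ε / 4) * (M - μ) :=
      mul_le_mul_of_nonneg_right hx2.le (by linarith)
    have hb : (1 + ε / 4) * (M - μ) ≤ (1 + ε) * (M - μ - μ * ε / 4) := by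
      nlinarith [mul_nonneg hε0.le (by linarith : (0:ℝ) ≤ M - 2 * μ),
        mul_nonneg (mul_nonneg hε0.le hμ0.le) (by linarith : (0:ℝ) ≤ 1 - ε)]
    have hb' : μ * ((1 + ε / 4) * (M - μ)) ≤ μ * ((1 + ε) * (M - μ - μ * ε / 4)) :=
      mul_le_mul_of_nonneg_left hb hμ0.le
    have s3 : (1 + ε) * ((M - μ - μ * ε / 4) * μ) ≤ (1 + ε) * ((M - x + 1) * μ) := by
      apply mul_le_mul_of_nonneg_left _ (by linarith : (0:ℝ) ≤ 1 + ε)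
      exact mul_le_mul_of_nonneg_right (by linarith) hμ0.le
    nlinarith [s1, hb', s3]

/-- Two-sided likelihood-ratio bound in the large-batch regime (`m > τ`): for the noise
    `B ~ Binomial(m, τ/(2m))` with mean `μ = τ/2` and every `t` in the concentration
    interval `(μ − √(3μL), μ + √(3μL))`,
    `e^{-ε}·P(B = t−1) ≤ P(B = t) ≤ e^{ε}·P(B = t−1)`. -/
theorem large_batch_likelihood_ratio
    (ε δ : ℝ) (hε : ε ∈ Set.Ioo (0:ℝ) 1) (hδ : δ ∈ Set.Ioo (0:ℝ) 1)
    (L τ : ℝ) (hL : L = Real.log (2 / δ)) (hτ : τ = 96 * L / ε ^ 2)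
    (m : ℕ) (hmτ : τ < (m : ℝ))
    (μ : ℝ) (hμ : μ = τ / 2)
    (t : ℕ) (ht1 : μ - Real.sqrt (3 * μ * L) < (t : ℝ))
    (ht2 : (t : ℝ) < μ + Real.sqrt (3 * μ * L)) :
    Real.exp (-ε) * binomPMF m (τ / (2 * m)) (t - 1) ≤ binomPMF m (τ / (2 * m)) t ∧
    binomPMF m (τ / (2 * m)) t ≤ Real.exp ε * binomPMF m (τ / (2 * m)) (t - 1) := by
  obtain ⟨hε0, hε1⟩ := hε
  obtain ⟨hδ0, hδ1⟩ := hδ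
  -- L ≥ 1/2
  have hLhalf : (1:ℝ)/2 ≤ L := by
    have h2 : (2:ℝ) ≤ 2 / δ := by
      rw [le_div_iff₀ hδ0]; nlinarith
    have h3 : Real.log 2 ≤ Real.log (2/δ) := Real.log_le_log (by norm_num) h2
    have hlog2 : (1:ℝ)/2 ≤ Real.log 2 := by
      have := Real.log_two_gt_d9; linarith
    rw [hL]; linarith
  have hμval : μ = 48 * L / ε ^ 2 := by rw [hμ, hτ]; ring
  have hμ24 : 24 ≤ μ := by
    rw [hμval, le_div_iff₀ (by positivity)]
    nlinarith
  have hεμ : 24 ≤ ε * μ := by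
    rw [hμval]
    have h : ε * (48 * L / ε ^ 2) = 48 * L / ε := by field_simp
    rw [h, le_div_iff₀ hε0]
    nlinarith
  have hμ0 : 0 < μ := by linarith
  -- sqrt simplification
  have hsqrt : Real.sqrt (3 * μ * L) = μ * ε / 4 := by
    have h : 3 * μ * L = (μ * ε / 4) ^ 2 := by
      rw [hμval]; field_simp; ring
    rw [h, Real.sqrt_sq (by positivity)]
  rw [hsqrt] at ht1 ht2
  have hτ2μ : τ = 2 * μ := by rw [hμ]; ring
  rw [hτ2μ] at hmτ
  clear hL hμval hsqrt hμ hδ0 hδ1 hLhalf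
  -- t ≥ 1 and t < m
  have hεμ4 : μ * ε ≤ μ := by nlinarith
  have hM0 : (0:ℝ) < (m:ℝ) := by linarith
  have ht_pos : 1 ≤ t := by
    have hx : (0:ℝ) < (t:ℝ) := by nlinarith
    have : 0 < t := by exact_mod_cast hx
    omega
  have htm : t < m := by
    have hx : (t:ℝ) < (m:ℝ) := by nlinarith
    exact_mod_cast hx
  obtain ⟨k, hk⟩ : ∃ k, t = k + 1 := ⟨t - 1, by omega⟩
  have hkm : k < m := by omega
  subst hk
  rw [show k + 1 - 1 = k from rfl]
  set M : ℝ := (m : ℝ) with hMdef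
  set p : ℝ := τ / (2 * M) with hp
  have hpM : p * M = μ := by
    rw [hp, hτ2μ]; field_simp
  have hp0 : 0 < p := by
    rw [hp, hτ2μ]
    exact div_pos (by linarith) (by linarith)
  have hp1 : p < 1 := by nlinarith [hpM]
  have hMμ : 2 * μ < M := hmτ
  clear_value p M
  clear hp hτ2μ hmτ hτ
  -- positivity of pmf at k
  have hA0 : 0 < binomPMF m p k := by
    unfold binomPMF
    have h1 : (0:ℝ) < (m.choose k : ℝ) := by
      exact_mod_cast Nat.choose_pos (le_of_lt hkm)
    exact mul_pos (mul_pos h1 (pow_pos hp0 k)) (pow_pos (by linarith) _)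
  have hR : binomPMF m p (k+1) * (((k:ℝ)+1) * (1 - p))
      = binomPMF m p k * ((M - (k:ℝ)) * p) := by
    rw [hMdef]; exact binomPMF_ratio m k hkm p
  set A := binomPMF m p k with hA
  set B := binomPMF m p (k+1) with hB
  clear_value A B
  set x : ℝ := (↑(k+1) : ℝ) with hxdef
  have hx1 : μ - μ * ε / 4 < x := ht1
  have hx2 : x < μ + μ * ε / 4 := ht2
  have hxk : (k:ℝ) = x - 1 := by rw [hxdef]; push_cast; ring
  have hkM : (k:ℝ) < M := by rw [hMdef, hxdef] at *; exact_mod_cast hkm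
  have hR' : B * (x * (1 - p)) = A * ((M - (x - 1)) * p) := by
    rw [← hxk]
    have hx' : ((k:ℝ) + 1) = x := by rw [hxdef]; push_cast; ring
    rw [← hx']
    exact hR
  clear_value x
  clear hR hxdef hA hB ht1 ht2 hxk
  -- elementary exp facts
  have hexp : 1 + ε ≤ Real.exp ε := by
    have := Real.add_one_le_exp ε; linarith
  have hexpneg_pos : 0 < Real.exp (-ε) := Real.exp_pos _
  have hexpneg : Real.exp (-ε) * (1 + ε) ≤ 1 := by
    have hm1 : Real.exp (-ε) * Real.exp ε = 1 := by
      rw [← Real.exp_add]; simp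
    have h2 := mul_le_mul_of_nonneg_left hexp hexpneg_pos.le
    linarith [hm1, h2]
  -- relations multiplied by M
  have hcM : x * (1 - p) * M = x * (M - μ) := by
    have h : (1 - p) * M = M - μ := by rw [← hpM]; ring
    linear_combination x * h
  have hdM : (M - (x - 1)) * p * M = (M - x + 1) * μ := by
    rw [← hpM]; ring
  obtain ⟨hcore1', hcore2'⟩ := lbr_core ε μ M x hε0 hε1 hμ24 hεμ hMμ hx1 hx2
  have hcore1 : (M - x + 1) * μ ≤ Real.exp ε * (x * (M - μ)) := by
    have hxM : 0 ≤ x * (M - μ) :=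
      mul_nonneg (by linarith) (by linarith)
    calc (M - x + 1) * μ ≤ (1 + ε) * (x * (M - μ)) := hcore1'
      _ ≤ Real.exp ε * (x * (M - μ)) := mul_le_mul_of_nonneg_right hexp hxM
  have hcore2 : Real.exp (-ε) * (x * (M - μ)) ≤ (M - x + 1) * μ := by
    have hd0 : 0 ≤ (M - x + 1) * μ :=
      mul_nonneg (by linarith) (by linarith)
    calc Real.exp (-ε) * (x * (M - μ))
        ≤ Real.exp (-ε) * ((1 + ε) * ((M - x + 1) * μ)) :=
          mul_le_mul_of_nonneg_left hcore2' hexpneg_pos.le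
      _ = (Real.exp (-ε) * (1 + ε)) * ((M - x + 1) * μ) := by ring
      _ ≤ 1 * ((M - x + 1) * μ) := mul_le_mul_of_nonneg_right hexpneg hd0
      _ = (M - x + 1) * μ := by ring
  have hc_pos : 0 < x * (1 - p) := mul_pos (by linarith) (by linarith)
  have hd_le : (M - (x - 1)) * p ≤ Real.exp ε * (x * (1 - p)) := by
    have h2 : (M - (x-1)) * p * M ≤ Real.exp ε * (x * (1 - p)) * M := by
      rw [hdM]
      calc (M - x + 1) * μ ≤ Real.exp ε * (x * (M - μ)) := hcore1
        _ = Real.exp ε * (x * (1 - p)) * M := by rw [← hcM]; ring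
    exact le_of_mul_le_mul_right h2 hM0
  have hd_ge : Real.exp (-ε) * (x * (1 - p)) ≤ (M - (x - 1)) * p := by
    have h2 : Real.exp (-ε) * (x * (1 - p)) * M ≤ (M - (x-1)) * p * M := by
      rw [hdM]
      calc Real.exp (-ε) * (x * (1 - p)) * M
          = Real.exp (-ε) * (x * (M - μ)) := by rw [← hcM]; ring
        _ ≤ (M - x + 1) * μ := hcore2
    exact le_of_mul_le_mul_right h2 hM0
  constructor
  · have h1 : (Real.exp (-ε) * A) * (x * (1 - p)) ≤ B * (x * (1 - p)) := by
      rw [hR']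
      calc (Real.exp (-ε) * A) * (x * (1 - p)) = A * (Real.exp (-ε) * (x * (1 - p))) := by ring
        _ ≤ A * ((M - (x - 1)) * p) := mul_le_mul_of_nonneg_left hd_ge (le_of_lt hA0)
    exact le_of_mul_le_mul_right h1 hc_pos
  · have h1 : B * (x * (1 - p)) ≤ (Real.exp ε * A) * (x * (1 - p)) := by
      rw [hR']
      calc A * ((M - (x - 1)) * p) ≤ A * (Real.exp ε * (x * (1 - p))) :=
            mul_le_mul_of_nonneg_left hd_le (le_of_lt hA0)
        _ = (Real.exp ε * A) * (x * (1 - p)) := by ring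
    exact le_of_mul_le_mul_right h1 hc_pos
end

section
/- Let ε ∈ (0,1) and δ ∈ (0,1) be real numbers, set L = log(2/δ) and τ = 96·L/ε². Let m ≥ 1 be a natural number with m ≤ τ, set n = ⌈τ/m⌉·m, and let B ~ Binomial(n, 1/2). Then for every natural number k and every set F ⊆ ℕ: P(k + B ∈ F) ≤ exp(ε)·P(k + 1 + B ∈ F) + δ, and P(k + 1 + B ∈ F) ≤ exp(ε)·P(k + B ∈ F) + δ. -/
lemma binomPMF_nonneg (n t : ℕ) : 0 ≤ binomPMF n (1/2) t := by
  unfold binomPMF; positivity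

lemma binomPMF_half (n t : ℕ) (ht : t ≤ n) :
    binomPMF n (1/2) t = (n.choose t : ℝ) * (1/2 : ℝ) ^ n := by
  unfold binomPMF
  rw [show (1 - 1/2 : ℝ) = 1/2 by norm_num, mul_assoc, ← pow_add,
    Nat.add_sub_cancel' ht]

lemma binomPMF_zero (n t : ℕ) (ht : n < t) : binomPMF n (1/2) t = 0 := by
  unfold binomPMF
  rw [Nat.choose_eq_zero_of_lt ht]; ring

lemma tsum_ind (n : ℕ) (S : Set ℕ) :
    ∑' t : ℕ, Set.indicator S (binomPMF n (1/2)) t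
      = ∑ t ∈ Finset.range (n+1), Set.indicator S (binomPMF n (1/2)) t := by
  refine tsum_eq_sum ?_
  intro t ht
  have h : n < t := by simpa using Finset.mem_range.not.mp ht
  exact Set.indicator_apply_eq_zero.mpr fun _ => binomPMF_zero n t h

lemma mgf_sum (n : ℕ) (y : ℝ) :
    ∑ t ∈ Finset.range (n+1), (n.choose t : ℝ) * Real.exp (y * t)
      = (1 + Real.exp y) ^ n := by
  rw [add_comm (1:ℝ), add_pow]
  refine Finset.sum_congr rfl fun t ht => ?_
  rw [one_pow, ← Real.exp_nat_mul]
  ring_nf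

lemma half_pow_mgf (n : ℕ) (x : ℝ) :
    (1/2:ℝ)^n * ((1 + Real.exp x)^n * Real.exp (-(x*n/2))) = Real.cosh (x/2) ^ n := by
  rw [show -(x*(n:ℝ)/2) = (n:ℝ) * (-(x/2)) by ring, Real.exp_nat_mul, ← mul_pow, ← mul_pow]
  congr 1
  rw [Real.cosh_eq,
    show (1/2:ℝ) * ((1+Real.exp x) * Real.exp (-(x/2)))
      = (Real.exp (-(x/2)) + Real.exp x * Real.exp (-(x/2)))/2 by ring, ← Real.exp_add]
  rw [show x + -(x/2) = x/2 by ring]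
  ring

lemma chernoff (n : ℕ) (hn : 0 < n) (a s : ℝ) (ha : 0 < a) (hs : s^2 = 1) :
    ∑ t ∈ (Finset.range (n+1)).filter (fun t : ℕ => a < s * ((t:ℝ) - n/2)),
      (n.choose t : ℝ) * (1/2:ℝ)^n ≤ Real.exp (-(2*a^2/n)) := by
  have hn0 : (0:ℝ) < n := by exact_mod_cast hn
  set lam : ℝ := 4*a/n with hlamdef
  have hlam : 0 < lam := by positivity
  have step1 : ∑ t ∈ (Finset.range (n+1)).filter (fun t : ℕ => a < s * ((t:ℝ) - n/2)),
      (n.choose t : ℝ) * (1/2:ℝ)^n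
      ≤ ∑ t ∈ Finset.range (n+1),
        (n.choose t : ℝ) * (1/2:ℝ)^n * Real.exp (lam * (s*((t:ℝ)-n/2)) - lam*a) := by
    refine le_trans (Finset.sum_le_sum fun t ht => ?_)
      (Finset.sum_le_sum_of_subset_of_nonneg (Finset.filter_subset _ _)
        (fun t _ _ => by positivity))
    have := (Finset.mem_filter.mp ht).2
    have h1 : (1:ℝ) ≤ Real.exp (lam * (s*((t:ℝ)-n/2)) - lam*a) := by
      rw [Real.one_le_exp_iff]
      have : lam * a ≤ lam * (s*((t:ℝ)-n/2)) :=
        mul_le_mul_of_nonneg_left this.le hlam.le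
      linarith
    exact le_mul_of_one_le_right (by positivity) h1
  have step2 : ∑ t ∈ Finset.range (n+1),
        (n.choose t : ℝ) * (1/2:ℝ)^n * Real.exp (lam * (s*((t:ℝ)-n/2)) - lam*a)
      = Real.exp (-(lam*a)) * ((1/2:ℝ)^n *
          ((1 + Real.exp (lam*s))^n * Real.exp (-(lam*s*n/2)))) := by
    rw [← mgf_sum n (lam*s)]
    simp only [Finset.sum_mul, Finset.mul_sum]
    refine Finset.sum_congr rfl fun t ht => ?_
    rw [show lam * (s*((t:ℝ)-n/2)) - lam*a
        = (lam*s*t) + (-(lam*s*(n:ℝ)/2) + -(lam*a)) by ring, Real.exp_add, Real.exp_add]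
    ring
  have step3 : Real.exp (-(lam*a)) * ((1/2:ℝ)^n *
          ((1 + Real.exp (lam*s))^n * Real.exp (-(lam*s*n/2))))
      ≤ Real.exp (-(2*a^2/n)) := by
    rw [half_pow_mgf n (lam*s)]
    have hc : Real.cosh (lam*s/2) ^ n ≤ Real.exp ((lam*s/2)^2/2) ^ n :=
      pow_le_pow_left₀ (Real.cosh_pos _).le (Real.cosh_le_exp_half_sq _) n
    have : Real.exp (-(lam*a)) * Real.cosh (lam*s/2) ^ n
        ≤ Real.exp (-(lam*a)) * Real.exp ((lam*s/2)^2/2) ^ n :=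
      mul_le_mul_of_nonneg_left hc (Real.exp_nonneg _)
    refine this.trans (le_of_eq ?_)
    rw [← Real.exp_nat_mul, ← Real.exp_add]
    congr 1
    have hs2 : (lam*s/2)^2 = lam^2/4 := by
      rw [div_pow, mul_pow, hs, mul_one]; norm_num
    rw [hs2, hlamdef]
    field_simp
    ring
  rw [step2] at step1
  exact step1.trans step3

set_option maxHeartbeats 1000000 in
/-- (ε, δ)-differential-privacy guarantee of the small-batch regime (`m ≤ τ`) of the
    shuffle-model binary summation mechanism: with noise `B ~ Binomial(⌈τ/m⌉·m, 1/2)`,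
    the output distributions `k + B` and `(k+1) + B` are (ε, δ)-close on every event. -/
theorem small_batch_privacy
    (ε δ : ℝ) (hε : ε ∈ Set.Ioo (0:ℝ) 1) (hδ : δ ∈ Set.Ioo (0:ℝ) 1)
    (L τ : ℝ) (hL : L = Real.log (2 / δ)) (hτ : τ = 96 * L / ε ^ 2)
    (m : ℕ) (hm : 1 ≤ m) (hmτ : (m : ℝ) ≤ τ)
    (n : ℕ) (hn : n = ⌈τ / (m : ℝ)⌉₊ * m) :
    ∀ (k : ℕ) (F : Set ℕ),
      (∑' t : ℕ, Set.indicator {t | k + t ∈ F} (binomPMF n (1/2)) t)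
        ≤ Real.exp ε * (∑' t : ℕ, Set.indicator {t | k + 1 + t ∈ F} (binomPMF n (1/2)) t)
          + δ ∧
      (∑' t : ℕ, Set.indicator {t | k + 1 + t ∈ F} (binomPMF n (1/2)) t)
        ≤ Real.exp ε * (∑' t : ℕ, Set.indicator {t | k + t ∈ F} (binomPMF n (1/2)) t)
          + δ := by
  classical
  obtain ⟨hε0, hε1⟩ := hε
  obtain ⟨hδ0, hδ1⟩ := hδ
  have hL2 : (0.6931471803 : ℝ) < L := by
    rw [hL]
    calc (0.6931471803:ℝ) < Real.log 2 := Real.log_two_gt_d9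
    _ ≤ Real.log (2/δ) := Real.log_le_log (by norm_num)
        (by rw [le_div_iff₀ hδ0]; nlinarith)
  have hL0 : 0 < L := by linarith
  have hτpos : 0 < τ := by rw [hτ]; positivity
  have hm0 : (0:ℝ) < m := by exact_mod_cast hm
  have hτn : τ ≤ (n:ℝ) := by
    have h1 : τ / m ≤ (⌈τ/(m:ℝ)⌉₊ : ℝ) := Nat.le_ceil _
    have h2 : (n:ℝ) = (⌈τ/(m:ℝ)⌉₊ : ℝ) * m := by rw [hn]; push_cast; ring
    rw [h2]
    calc τ = τ/m * m := by field_simp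
    _ ≤ _ := mul_le_mul_of_nonneg_right h1 hm0.le
  have hn96 : 96 * L / ε^2 ≤ (n:ℝ) := hτ ▸ hτn
  have hnR : (0:ℝ) < n := lt_of_lt_of_le hτpos hτn
  have hnpos : 0 < n := by exact_mod_cast hnR
  have hεn : 8 ≤ ε * n := by
    have h2 : ε * (96*L/ε^2) ≤ ε * n := mul_le_mul_of_nonneg_left hn96 hε0.le
    have h3 : ε * (96*L/ε^2) = 96*L/ε := by field_simp
    have h4 : 96*L ≤ 96*L/ε := by
      rw [le_div_iff₀ hε0]; nlinarith
    linarith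
  set a : ℝ := ε * n / 8 with hadef
  have ha : 0 < a := by positivity
  have hkey : (n:ℝ)/2 + a + 1 ≤ (1+ε)*((n:ℝ)/2 - a) := by
    have h1 : (8:ℝ)*(2-ε) ≤ (ε*n)*(2-ε) :=
      mul_le_mul_of_nonneg_right hεn (by linarith)
    rw [hadef]; nlinarith
  have hhalf : 0 < (n:ℝ)/2 - a := by rw [hadef]; nlinarith
  have hub : (n:ℝ)/2 + a < n := by rw [hadef]; nlinarith
  have hexp : Real.exp (-(2*a^2/(n:ℝ))) ≤ δ/2 := by
    have he : 2*a^2/(n:ℝ) = ε^2*n/32 := by rw [hadef]; field_simp; ring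
    have h1 : ε^2 * (96*L/ε^2) ≤ ε^2 * n := mul_le_mul_of_nonneg_left hn96 (sq_nonneg ε)
    have h2 : ε^2 * (96*L/ε^2) = 96*L := by field_simp
    have h3 : L ≤ 2*a^2/(n:ℝ)  := by rw [he]; nlinarith
    calc Real.exp (-(2*a^2/(n:ℝ))) ≤ Real.exp (-L) := Real.exp_le_exp.mpr (by linarith)
    _ = δ/2 := by
        rw [hL, Real.exp_neg, Real.exp_log (by positivity), inv_div]
  intro k F
  set P : ℕ → ℝ := binomPMF n (1/2) with hPdef
  have hP0 : ∀ t, 0 ≤ P t := binomPMF_nonneg n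
  set pr : ℕ → Prop := fun t => (n:ℝ)/2 - a ≤ (t:ℝ) ∧ (t:ℝ) ≤ (n:ℝ)/2 + a with hprdef
  set G : Finset ℕ := (Finset.range (n+1)).filter pr with hGdef
  -- bad mass bound
  have hbad : ∑ t ∈ (Finset.range (n+1)).filter (fun t => ¬ pr t), P t ≤ δ := by
    set Lo := (Finset.range (n+1)).filter (fun t : ℕ => a < (-1) * ((t:ℝ) - n/2)) with hLo
    set Hi := (Finset.range (n+1)).filter (fun t : ℕ => a < (1:ℝ) * ((t:ℝ) - n/2)) with hHi
    have hsub : (Finset.range (n+1)).filter (fun t => ¬ pr t) ⊆ Lo ∪ Hi := by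
      intro t ht
      simp only [hLo, hHi, Finset.mem_union, Finset.mem_filter, Finset.mem_range] at ht ⊢
      obtain ⟨h1, h2⟩ := ht
      simp only [hprdef] at h2; push_neg at h2
      by_cases hc : (n:ℝ)/2 - a ≤ (t:ℝ)
      · exact Or.inr ⟨h1, by have := h2 hc; linarith⟩
      · exact Or.inl ⟨h1, by push_neg at hc; linarith⟩
    have hLoB : ∑ t ∈ Lo, P t ≤ δ/2 := by
      refine le_trans (le_of_eq (Finset.sum_congr rfl fun t ht => ?_))
        (le_trans (chernoff n hnpos a (-1) ha (by norm_num)) hexp)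
      have htn : t ≤ n := by
        have := (Finset.mem_filter.mp ht).1; simp at this; omega
      exact binomPMF_half n t htn
    have hHiB : ∑ t ∈ Hi, P t ≤ δ/2 := by
      refine le_trans (le_of_eq (Finset.sum_congr rfl fun t ht => ?_))
        (le_trans (chernoff n hnpos a 1 ha (by norm_num)) hexp)
      have htn : t ≤ n := by
        have := (Finset.mem_filter.mp ht).1; simp at this; omega
      exact binomPMF_half n t htn
    have hunion : ∑ t ∈ Lo ∪ Hi, P t ≤ ∑ t ∈ Lo, P t + ∑ t ∈ Hi, P t := by
      have := Finset.sum_union_inter (s₁ := Lo) (s₂ := Hi) (f := P)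
      have hnn : 0 ≤ ∑ t ∈ Lo ∩ Hi, P t := Finset.sum_nonneg fun t _ => hP0 t
      linarith
    calc ∑ t ∈ (Finset.range (n+1)).filter (fun t => ¬ pr t), P t
        ≤ ∑ t ∈ Lo ∪ Hi, P t :=
          Finset.sum_le_sum_of_subset_of_nonneg hsub (fun t _ _ => hP0 t)
    _ ≤ δ/2 + δ/2 := by linarith
    _ = δ := by ring
  -- membership facts for the good set
  have hGmem : ∀ t ∈ G, 1 ≤ t ∧ t < n ∧ (n:ℝ)/2 - a ≤ (t:ℝ) ∧ (t:ℝ) ≤ (n:ℝ)/2 + a := by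
    intro t ht
    rw [hGdef, Finset.mem_filter, Finset.mem_range, hprdef] at ht
    obtain ⟨h1, h2, h3⟩ := ht
    have ht1 : 1 ≤ t := by
      rcases Nat.eq_zero_or_pos t with h | h
      · exfalso; rw [h] at h2; push_cast at h2; linarith
      · exact h
    have htn : t < n := by
      have : (t:ℝ) < n := lt_of_le_of_lt h3 hub
      exact_mod_cast this
    exact ⟨ht1, htn, h2, h3⟩
  have h1p : (1+ε) ≤ Real.exp ε := by
    have := Real.add_one_le_exp ε; linarith
  -- choose cast identity
  have hcr : ∀ s : ℕ, s < n →
      (n.choose (s+1) : ℝ) * ((s:ℝ)+1) = (n.choose s : ℝ) * ((n:ℝ) - s) := by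
    intro s hs
    have h := Nat.choose_succ_right_eq n s
    calc (n.choose (s+1):ℝ) * ((s:ℝ)+1) = ((n.choose (s+1) * (s+1) : ℕ) : ℝ) := by
          push_cast; ring
    _ = ((n.choose s * (n - s) : ℕ):ℝ) := by rw [h]
    _ = _ := by push_cast [Nat.cast_sub hs.le]; ring
  -- ratio bounds on the good set
  have hRdown : ∀ t ∈ G, P t ≤ Real.exp ε * P (t-1) := by
    intro t ht
    obtain ⟨ht1, htn, hlo, hhi⟩ := hGmem t ht
    obtain ⟨s, rfl⟩ : ∃ s, t = s+1 := ⟨t-1, by omega⟩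
    rw [hPdef, Nat.add_sub_cancel, binomPMF_half n (s+1) (by omega),
      binomPMF_half n s (by omega)]
    have hslt : s < n := by omega
    have hc := hcr s hslt
    have hcast : ((s:ℝ)+1) = ((s+1 : ℕ) : ℝ) := by push_cast; ring
    have hlo' : (n:ℝ)/2 - a ≤ (s:ℝ)+1 := by rw [hcast]; exact_mod_cast hlo
    have hnms : (n:ℝ) - s ≤ (1+ε)*((s:ℝ)+1) := by nlinarith
    have hs1 : (0:ℝ) < (s:ℝ)+1 := by positivity
    have hcle : (n.choose (s+1):ℝ) ≤ (1+ε) * n.choose s := by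
      have h3 : (n.choose (s+1):ℝ)*((s:ℝ)+1) ≤ ((1+ε) * n.choose s) * ((s:ℝ)+1) := by
        rw [hc]
        calc (n.choose s:ℝ)*((n:ℝ)-s) ≤ (n.choose s:ℝ)*((1+ε)*((s:ℝ)+1)) :=
              mul_le_mul_of_nonneg_left hnms (Nat.cast_nonneg _)
        _ = ((1+ε)*n.choose s)*((s:ℝ)+1) := by ring
      exact le_of_mul_le_mul_right h3 hs1
    calc (n.choose (s+1):ℝ) * (1/2:ℝ)^n ≤ ((1+ε)*(n.choose s:ℝ))*(1/2:ℝ)^n :=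
          mul_le_mul_of_nonneg_right hcle (by positivity)
    _ = (1+ε) * ((n.choose s:ℝ)*(1/2:ℝ)^n) := by ring
    _ ≤ Real.exp ε * ((n.choose s:ℝ)*(1/2:ℝ)^n) :=
          mul_le_mul_of_nonneg_right h1p (by positivity)
  have hRup : ∀ t ∈ G, P t ≤ Real.exp ε * P (t+1) := by
    intro t ht
    obtain ⟨ht1, htn, hlo, hhi⟩ := hGmem t ht
    rw [hPdef, binomPMF_half n t (by omega), binomPMF_half n (t+1) (by omega)]
    have hc := hcr t htn
    have hnmt : (0:ℝ) < (n:ℝ) - t := by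
      have : (t:ℝ) < n := by exact_mod_cast htn
      linarith
    have ht1e : (t:ℝ)+1 ≤ (1+ε)*((n:ℝ)-t) := by nlinarith
    have hcle : (n.choose t:ℝ) ≤ (1+ε) * n.choose (t+1) := by
      have h3 : (n.choose t:ℝ)*((n:ℝ)-t) ≤ ((1+ε) * n.choose (t+1)) * ((n:ℝ)-t) := by
        rw [← hc]
        calc (n.choose (t+1):ℝ)*((t:ℝ)+1) ≤ (n.choose (t+1):ℝ)*((1+ε)*((n:ℝ)-t)) :=
              mul_le_mul_of_nonneg_left ht1e (Nat.cast_nonneg _)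
        _ = ((1+ε)*n.choose (t+1))*((n:ℝ)-t) := by ring
      exact le_of_mul_le_mul_right h3 hnmt
    calc (n.choose t:ℝ) * (1/2:ℝ)^n ≤ ((1+ε)*(n.choose (t+1):ℝ))*(1/2:ℝ)^n :=
          mul_le_mul_of_nonneg_right hcle (by positivity)
    _ = (1+ε) * ((n.choose (t+1):ℝ)*(1/2:ℝ)^n) := by ring
    _ ≤ Real.exp ε * ((n.choose (t+1):ℝ)*(1/2:ℝ)^n) :=
          mul_le_mul_of_nonneg_right h1p (by positivity)
  -- reduce tsums to finite sums
  have hts1 : (∑' t : ℕ, Set.indicator {t | k + t ∈ F} (binomPMF n (1/2)) t)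
      = ∑ t ∈ Finset.range (n+1), if k + t ∈ F then P t else 0 := by
    rw [tsum_ind n]
    exact Finset.sum_congr rfl fun t _ => by
      rw [Set.indicator_apply]; simp only [Set.mem_setOf_eq]; rfl
  have hts2 : (∑' t : ℕ, Set.indicator {t | k + 1 + t ∈ F} (binomPMF n (1/2)) t)
      = ∑ t ∈ Finset.range (n+1), if k + 1 + t ∈ F then P t else 0 := by
    rw [tsum_ind n]
    exact Finset.sum_congr rfl fun t _ => by
      rw [Set.indicator_apply]; simp only [Set.mem_setOf_eq]; rfl
  rw [hts1, hts2]
  have hsplit1 : ∑ t ∈ Finset.range (n+1), (if k + t ∈ F then P t else 0)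
      = ∑ t ∈ G, (if k + t ∈ F then P t else 0)
        + ∑ t ∈ (Finset.range (n+1)).filter (fun t => ¬ pr t),
            (if k + t ∈ F then P t else 0) :=
    (Finset.sum_filter_add_sum_filter_not _ pr _).symm
  have hsplit2 : ∑ t ∈ Finset.range (n+1), (if k + 1 + t ∈ F then P t else 0)
      = ∑ t ∈ G, (if k + 1 + t ∈ F then P t else 0)
        + ∑ t ∈ (Finset.range (n+1)).filter (fun t => ¬ pr t),
            (if k + 1 + t ∈ F then P t else 0) :=
    (Finset.sum_filter_add_sum_filter_not _ pr _).symm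
  have hbad1 : ∑ t ∈ (Finset.range (n+1)).filter (fun t => ¬ pr t),
      (if k + t ∈ F then P t else 0) ≤ δ := by
    refine le_trans (Finset.sum_le_sum fun t _ => ?_) hbad
    split_ifs; exacts [le_refl _, hP0 t]
  have hbad2 : ∑ t ∈ (Finset.range (n+1)).filter (fun t => ¬ pr t),
      (if k + 1 + t ∈ F then P t else 0) ≤ δ := by
    refine le_trans (Finset.sum_le_sum fun t _ => ?_) hbad
    split_ifs; exacts [le_refl _, hP0 t]
  constructor
  · -- direction 1
    have hG1 : ∑ t ∈ G, (if k + t ∈ F then P t else 0)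
        ≤ Real.exp ε * ∑ t ∈ Finset.range (n+1), (if k + 1 + t ∈ F then P t else 0) := by
      calc ∑ t ∈ G, (if k + t ∈ F then P t else 0)
          ≤ ∑ t ∈ G, (if k + t ∈ F then Real.exp ε * P (t-1) else 0) := by
            refine Finset.sum_le_sum fun t ht => ?_
            split_ifs
            · exact hRdown t ht
            · exact le_refl _
      _ = Real.exp ε * ∑ t ∈ G, (if k + 1 + (t-1) ∈ F then P (t-1) else 0) := by
            rw [Finset.mul_sum]
            refine Finset.sum_congr rfl fun t ht => ?_
            have ht1 : 1 ≤ t := (hGmem t ht).1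
            rw [show k + t = k + 1 + (t-1) by omega]
            split_ifs <;> ring
      _ = Real.exp ε * ∑ s ∈ G.image (· - 1), (if k + 1 + s ∈ F then P s else 0) := by
            congr 1
            rw [Finset.sum_image]
            intro x hx y hy hxy
            have := (hGmem x hx).1; have := (hGmem y hy).1
            simp only at hxy
            omega
      _ ≤ Real.exp ε * ∑ t ∈ Finset.range (n+1), (if k + 1 + t ∈ F then P t else 0) := by
            refine mul_le_mul_of_nonneg_left ?_ (Real.exp_nonneg _)
            refine Finset.sum_le_sum_of_subset_of_nonneg ?_ fun t _ _ => ?_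
            · intro s hs
              obtain ⟨t, ht, rfl⟩ := Finset.mem_image.mp hs
              have htn : t < n := (hGmem t ht).2.1
              simp only [Finset.mem_range]; omega
            · split_ifs; exacts [hP0 t, le_refl _]
    rw [hsplit1]
    linarith
  · -- direction 2
    have hG2 : ∑ t ∈ G, (if k + 1 + t ∈ F then P t else 0)
        ≤ Real.exp ε * ∑ t ∈ Finset.range (n+1), (if k + t ∈ F then P t else 0) := by
      calc ∑ t ∈ G, (if k + 1 + t ∈ F then P t else 0)
          ≤ ∑ t ∈ G, (if k + 1 + t ∈ F then Real.exp ε * P (t+1) else 0) := by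
            refine Finset.sum_le_sum fun t ht => ?_
            split_ifs
            · exact hRup t ht
            · exact le_refl _
      _ = Real.exp ε * ∑ t ∈ G, (if k + (t+1) ∈ F then P (t+1) else 0) := by
            rw [Finset.mul_sum]
            refine Finset.sum_congr rfl fun t ht => ?_
            rw [show k + 1 + t = k + (t+1) by omega]
            split_ifs <;> ring
      _ = Real.exp ε * ∑ s ∈ G.image (· + 1), (if k + s ∈ F then P s else 0) := by
            congr 1
            rw [Finset.sum_image]
            intro x _ y _ hxy
            simp only at hxy
            omega
      _ ≤ Real.exp ε * ∑ t ∈ Finset.range (n+1), (if k + t ∈ F then P t else 0) := by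
            refine mul_le_mul_of_nonneg_left ?_ (Real.exp_nonneg _)
            refine Finset.sum_le_sum_of_subset_of_nonneg ?_ fun t _ _ => ?_
            · intro s hs
              obtain ⟨t, ht, rfl⟩ := Finset.mem_image.mp hs
              have htn : t < n := (hGmem t ht).2.1
              simp only [Finset.mem_range]; omega
            · split_ifs; exacts [hP0 t, le_refl _]
    rw [hsplit2]
    linarith
end

section
/- Let ε ∈ (0,1) and δ ∈ (0,1) be real numbers, set L = log(2/δ) and τ = 96·L/ε². Let m be a natural number with m > τ, and let B ~ Binomial(m, τ/(2m)). Then for every natural number k and every set F ⊆ ℕ: P(k + B ∈ F) ≤ exp(ε)·P(k + 1 + B ∈ F) + δ, and P(k + 1 + B ∈ F) ≤ exp(ε)·P(k + B ∈ F) + δ. -/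
lemma binom_nonneg {m : ℕ} {p : ℝ} (hp0 : 0 ≤ p) (hp1 : p ≤ 1) (t : ℕ) :
    0 ≤ binomPMF m p t := by
  unfold binomPMF
  have : (0:ℝ) ≤ 1 - p := by linarith
  positivity

lemma binom_zero {m : ℕ} (p : ℝ) {t : ℕ} (h : m < t) : binomPMF m p t = 0 := by
  unfold binomPMF
  rw [Nat.choose_eq_zero_of_lt h]
  simp

lemma exp_quad {x : ℝ} (hx : |x| ≤ 1) : Real.exp x ≤ 1 + x + (3/4) * x ^ 2 := by
  have h := Real.exp_bound hx (n := 2) (by norm_num)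
  have h2 : ∑ m ∈ Finset.range 2, x ^ m / (m.factorial : ℝ) = 1 + x := by
    simp [Finset.sum_range_succ]
  rw [h2] at h
  have := abs_le.mp h
  have hx2 : |x| ^ 2 = x ^ 2 := sq_abs x
  norm_num [hx2] at this
  nlinarith [this.2]

lemma binom_step {m : ℕ} (p : ℝ) {s : ℕ} (hs : s < m) :
    ((s:ℝ)+1) * (1-p) * binomPMF m p (s+1) = ((m:ℝ) - s) * p * binomPMF m p s := by
  unfold binomPMF
  have hms : m - (s+1) + 1 = m - s := by omega
  have hcR : ((m.choose (s+1)):ℝ) * ((s:ℝ)+1) = (m.choose s : ℝ) * ((m:ℝ) - s) := by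
    have := Nat.choose_succ_right_eq m s
    have hcast : ((m - s : ℕ) : ℝ) = (m:ℝ) - s := by
      rw [Nat.cast_sub hs.le]
    calc ((m.choose (s+1)):ℝ) * ((s:ℝ)+1) = ((m.choose (s+1) * (s+1) : ℕ) : ℝ) := by push_cast; ring
    _ = ((m.choose s * (m - s) : ℕ) : ℝ) := by rw [this]
    _ = (m.choose s : ℝ) * ((m:ℝ) - s) := by push_cast [Nat.cast_sub hs.le]; ring
  rw [show m - s = m - (s+1) + 1 from hms.symm, pow_succ, pow_succ]
  linear_combination (p ^ s * p * (1-p) * (1-p) ^ (m-(s+1))) * hcR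

lemma binom_mgf (m : ℕ) (p x : ℝ) :
    ∑ t ∈ Finset.range (m+1), binomPMF m p t * x ^ t = (p * x + (1 - p)) ^ m := by
  rw [add_pow]
  apply Finset.sum_congr rfl
  intro t _
  unfold binomPMF
  rw [mul_pow]
  ring

section ratio
variable {ε τ : ℝ} {m : ℕ}
  (hε0 : 0 < ε) (hε1 : ε < 1) (h64 : 64 ≤ ε * τ) (hmτ : τ < m)

include hε0 hε1 h64 hmτ

lemma basic_facts : 0 < τ ∧ 0 < (m:ℝ) ∧ 0 ≤ τ/(2*m) ∧ τ/(2*m) ≤ 1 := by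
  have hτ0 : 0 < τ := by nlinarith
  have hm0 : 0 < (m:ℝ) := lt_trans hτ0 hmτ
  refine ⟨hτ0, hm0, by positivity, ?_⟩
  rw [div_le_one (by positivity)]
  linarith

lemma key_up {s : ℕ} (hs1 : (1-ε/4)*(τ/2) - 1 ≤ (s:ℝ)) (hs2 : (s:ℝ) ≤ (1+ε/4)*(τ/2)) :
    τ*((m:ℝ)-s) ≤ (1+ε)*(((s:ℝ)+1)*(2*m-τ)) := by
  have hτ0 : 0 < τ := by nlinarith
  have hX0 : (0:ℝ) ≤ (s:ℝ) + 1 - (1-ε/4)*(τ/2) := by linarith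
  have hY0 : (0:ℝ) ≤ 2*(m:ℝ) - τ - τ := by linarith
  have hεcompleteτ : (0:ℝ) ≤ ε*τ - 64 := by linarith
  nlinarith [mul_nonneg hX0 (by linarith : (0:ℝ) ≤ 2*(m:ℝ)-τ),
    mul_nonneg (mul_nonneg hε0.le hX0) (by linarith : (0:ℝ) ≤ 2*(m:ℝ)-τ),
    mul_nonneg hτ0.le hX0,
    mul_nonneg (mul_nonneg hε0.le (by linarith : (0:ℝ) ≤ 1 - ε)) (by nlinarith : (0:ℝ) ≤ τ*m - τ^2/2),
    mul_nonneg hεcompleteτ hτ0.le]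

lemma key_down {s : ℕ} (hs1 : (1-ε/4)*(τ/2) - 1 ≤ (s:ℝ)) (hs2 : (s:ℝ) ≤ (1+ε/4)*(τ/2)) :
    ((s:ℝ)+1)*(2*m-τ) ≤ (1+ε)*(τ*((m:ℝ)-s)) := by
  have hτ0 : 0 < τ := by nlinarith
  have hZ0 : (0:ℝ) ≤ (1+ε/4)*(τ/2) - s := by linarith
  have h8 : (0:ℝ) ≤ 3*ε*τ/8 - 1 := by nlinarith
  nlinarith [mul_nonneg hZ0 hτ0.le,
    mul_nonneg hZ0 (by linarith : (0:ℝ) ≤ 2*(m:ℝ)-τ),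
    mul_nonneg (mul_nonneg hZ0 hε0.le) hτ0.le,
    mul_nonneg (by linarith : (0:ℝ) ≤ 2*(m:ℝ)-τ-τ) h8,
    mul_nonneg (by linarith : (0:ℝ) ≤ 1-ε) (by positivity : (0:ℝ) ≤ ε*τ^2),
    mul_nonneg (by linarith : (0:ℝ) ≤ ε*τ-64) hτ0.le]

lemma ratio_up {s : ℕ} (hs1 : (1-ε/4)*(τ/2) - 1 ≤ (s:ℝ)) (hs2 : (s:ℝ) ≤ (1+ε/4)*(τ/2)) :
    binomPMF m (τ/(2*m)) (s+1) ≤ Real.exp ε * binomPMF m (τ/(2*m)) s := by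
  obtain ⟨hτ0, hm0, hp0, hp1⟩ := basic_facts hε0 hε1 h64 hmτ
  have hsm : (s:ℝ) < m := by nlinarith
  have hsmn : s < m := by exact_mod_cast hsm
  set p := τ/(2*(m:ℝ)) with hp
  have h2m : (0:ℝ) < 2*m := by positivity
  have hpτ : p * (2*(m:ℝ)) = τ := div_mul_cancel₀ τ (ne_of_gt h2m)
  have hplt : p < 1 := by rw [hp, div_lt_one h2m]; linarith
  have key := key_up hε0 hε1 h64 hmτ hs1 hs2
  have hU : ((m:ℝ)-s)*p ≤ (1+ε)*(((s:ℝ)+1)*(1-p)) := by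
    have hX : (((m:ℝ)-s)*p) * (2*(m:ℝ)) = τ*((m:ℝ)-s) := by
      linear_combination ((m:ℝ)-s) * hpτ
    have hY : ((1+ε)*(((s:ℝ)+1)*(1-p))) * (2*(m:ℝ)) = (1+ε)*(((s:ℝ)+1)*(2*(m:ℝ)-τ)) := by
      linear_combination (-((1+ε)*((s:ℝ)+1))) * hpτ
    exact le_of_mul_le_mul_right (by rw [hX, hY]; exact key) h2m
  have hexp : (1:ℝ)+ε ≤ Real.exp ε := by
    have := Real.add_one_le_exp ε; linarith
  have hPs := binom_nonneg (m := m) hp0 hp1 s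
  have hq0 : (0:ℝ) ≤ ((s:ℝ)+1)*(1-p) := mul_nonneg (by positivity) (by linarith)
  have hfac : (0:ℝ) < ((s:ℝ)+1)*(1-p) := mul_pos (by positivity) (by linarith)
  have hchain : ((s:ℝ)+1)*(1-p) * binomPMF m p (s+1) ≤ ((s:ℝ)+1)*(1-p) * (Real.exp ε * binomPMF m p s) := by
    rw [binom_step p hsmn]
    calc ((m:ℝ)-s)*p*binomPMF m p s ≤ ((1+ε)*(((s:ℝ)+1)*(1-p)))*binomPMF m p s :=
          mul_le_mul_of_nonneg_right hU hPs
    _ ≤ (Real.exp ε*(((s:ℝ)+1)*(1-p)))*binomPMF m p s :=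
          mul_le_mul_of_nonneg_right (mul_le_mul_of_nonneg_right hexp hq0) hPs
    _ = ((s:ℝ)+1)*(1-p) * (Real.exp ε * binomPMF m p s) := by ring
  exact le_of_mul_le_mul_left hchain hfac

lemma ratio_down {s : ℕ} (hs1 : (1-ε/4)*(τ/2) - 1 ≤ (s:ℝ)) (hs2 : (s:ℝ) ≤ (1+ε/4)*(τ/2)) :
    binomPMF m (τ/(2*m)) s ≤ Real.exp ε * binomPMF m (τ/(2*m)) (s+1) := by
  obtain ⟨hτ0, hm0, hp0, hp1⟩ := basic_facts hε0 hε1 h64 hmτ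
  have hsm : (s:ℝ) < m := by nlinarith
  have hsmn : s < m := by exact_mod_cast hsm
  set p := τ/(2*(m:ℝ)) with hp
  have h2m : (0:ℝ) < 2*m := by positivity
  have hpτ : p * (2*(m:ℝ)) = τ := div_mul_cancel₀ τ (ne_of_gt h2m)
  have hplt : p < 1 := by rw [hp, div_lt_one h2m]; linarith
  have key := key_down hε0 hε1 h64 hmτ hs1 hs2
  have hLx : ((s:ℝ)+1)*(1-p) ≤ (1+ε)*(((m:ℝ)-s)*p) := by
    have hX : (((s:ℝ)+1)*(1-p)) * (2*(m:ℝ)) = ((s:ℝ)+1)*(2*(m:ℝ)-τ) := by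
      linear_combination (-((s:ℝ)+1)) * hpτ
    have hY : ((1+ε)*(((m:ℝ)-s)*p)) * (2*(m:ℝ)) = (1+ε)*(τ*((m:ℝ)-s)) := by
      linear_combination ((1+ε)*((m:ℝ)-s)) * hpτ
    exact le_of_mul_le_mul_right (by rw [hX, hY]; exact key) h2m
  have hexp : (1:ℝ)+ε ≤ Real.exp ε := by
    have := Real.add_one_le_exp ε; linarith
  have hPs := binom_nonneg (m := m) hp0 hp1 s
  have hfac : (0:ℝ) < ((s:ℝ)+1)*(1-p) := mul_pos (by positivity) (by linarith)
  have hq0 : (0:ℝ) ≤ ((m:ℝ)-s)*p := mul_nonneg (by linarith) hp0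
  have hchain : ((s:ℝ)+1)*(1-p) * binomPMF m p s ≤ ((s:ℝ)+1)*(1-p) * (Real.exp ε * binomPMF m p (s+1)) := by
    have hstep := binom_step p hsmn
    calc ((s:ℝ)+1)*(1-p) * binomPMF m p s ≤ ((1+ε)*(((m:ℝ)-s)*p)) * binomPMF m p s :=
          mul_le_mul_of_nonneg_right hLx hPs
    _ ≤ (Real.exp ε*(((m:ℝ)-s)*p)) * binomPMF m p s :=
          mul_le_mul_of_nonneg_right (mul_le_mul_of_nonneg_right hexp hq0) hPs
    _ = Real.exp ε * (((m:ℝ)-s)*p * binomPMF m p s) := by ring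
    _ = Real.exp ε * (((s:ℝ)+1)*(1-p) * binomPMF m p (s+1)) := by rw [hstep]
    _ = ((s:ℝ)+1)*(1-p) * (Real.exp ε * binomPMF m p (s+1)) := by ring
  exact le_of_mul_le_mul_left hchain hfac

end ratio

section tails
variable {ε τ L : ℝ} {m : ℕ}
  (hε0 : 0 < ε) (hε1 : ε < 1) (h64 : 64 ≤ ε * τ) (hmτ : τ < m)
  (hL96 : τ * ε^2 = 96 * L)

include hε0 hε1 h64 hmτ hL96

/-- generic Chernoff-style bound: given λ with the exponent bound, both tails.
    We prove the two tails separately. -/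
lemma tail_high :
    ∑ t ∈ Finset.range (m+1), (if (1+ε/4)*(τ/2) < (t:ℝ) then binomPMF m (τ/(2*(m:ℝ))) t else 0)
      ≤ Real.exp (-L) := by
  have hτ0 : 0 < τ := by nlinarith
  have hm0 : 0 < (m:ℝ) := lt_trans hτ0 hmτ
  set p := τ/(2*(m:ℝ)) with hp
  have h2m : (0:ℝ) < 2*m := by positivity
  have hp0 : 0 ≤ p := by positivity
  have hp1 : p ≤ 1 := by rw [hp, div_le_one h2m]; linarith
  set lam := ε/6 with hlam
  set A := (1+ε/4)*(τ/2) with hA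
  have hlam0 : 0 < lam := by positivity
  have step1 : ∑ t ∈ Finset.range (m+1), (if A < (t:ℝ) then binomPMF m p t else 0)
      ≤ ∑ t ∈ Finset.range (m+1), Real.exp (lam*((t:ℝ) - A)) * binomPMF m p t := by
    apply Finset.sum_le_sum
    intro t _
    split_ifs with h
    · have h1 : 1 ≤ Real.exp (lam*((t:ℝ)-A)) :=
        Real.one_le_exp (by nlinarith)
      exact le_mul_of_one_le_left (binom_nonneg hp0 hp1 t) h1
    · exact mul_nonneg (Real.exp_pos _).le (binom_nonneg hp0 hp1 t)
  have step2 : ∑ t ∈ Finset.range (m+1), Real.exp (lam*((t:ℝ) - A)) * binomPMF m p t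
      = Real.exp (-(lam*A)) * (p * Real.exp lam + (1-p)) ^ m := by
    rw [← binom_mgf m p (Real.exp lam), Finset.mul_sum]
    apply Finset.sum_congr rfl
    intro t _
    have hh : Real.exp (lam*((t:ℝ)-A)) = Real.exp (-(lam*A)) * Real.exp lam ^ t := by
      rw [← Real.exp_nat_mul, ← Real.exp_add]; congr 1; ring
    rw [hh]; ring
  have hbase : p * Real.exp lam + (1-p) ≤ Real.exp (p*(Real.exp lam - 1)) := by
    have := Real.add_one_le_exp (p*(Real.exp lam - 1))
    nlinarith
  have hbase0 : 0 ≤ p * Real.exp lam + (1-p) :=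
    add_nonneg (mul_nonneg hp0 (Real.exp_pos _).le) (by linarith)
  have step3 : (p * Real.exp lam + (1-p)) ^ m ≤ Real.exp ((m:ℝ)*(p*(Real.exp lam - 1))) := by
    calc (p * Real.exp lam + (1-p)) ^ m ≤ (Real.exp (p*(Real.exp lam - 1))) ^ m :=
          pow_le_pow_left₀ hbase0 hbase m
    _ = Real.exp ((m:ℝ)*(p*(Real.exp lam - 1))) := (Real.exp_nat_mul _ m).symm
  have hmp : (m:ℝ) * p = τ/2 := by
    rw [hp]; field_simp
  have hquad := exp_quad (x := lam) (by rw [hlam, abs_of_pos (by positivity)]; linarith)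
  have hexpo : (m:ℝ)*(p*(Real.exp lam - 1)) - lam*A ≤ -L := by
    have h7 : (m:ℝ)*(p*(Real.exp lam - 1)) = (τ/2)*(Real.exp lam) - τ/2 := by
      rw [← mul_assoc, hmp]; ring
    have hkey : (τ/2)*(Real.exp lam) ≤ (τ/2)*(1 + lam + (3/4)*lam^2) :=
      mul_le_mul_of_nonneg_left hquad (by linarith)
    rw [h7, hA, hlam]
    rw [hlam] at hkey
    nlinarith [hkey, hL96, hτ0]
  calc ∑ t ∈ Finset.range (m+1), (if A < (t:ℝ) then binomPMF m p t else 0)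
      ≤ Real.exp (-(lam*A)) * (p * Real.exp lam + (1-p)) ^ m := by rw [← step2]; exact step1
  _ ≤ Real.exp (-(lam*A)) * Real.exp ((m:ℝ)*(p*(Real.exp lam - 1))) :=
      mul_le_mul_of_nonneg_left step3 (Real.exp_pos _).le
  _ = Real.exp ((m:ℝ)*(p*(Real.exp lam - 1)) - lam*A) := by rw [← Real.exp_add]; ring_nf
  _ ≤ Real.exp (-L) := Real.exp_le_exp.mpr hexpo

lemma tail_low :
    ∑ t ∈ Finset.range (m+1), (if (t:ℝ) ≤ (1-ε/4)*(τ/2) then binomPMF m (τ/(2*(m:ℝ))) t else 0)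
      ≤ Real.exp (-L) := by
  have hτ0 : 0 < τ := by nlinarith
  have hm0 : 0 < (m:ℝ) := lt_trans hτ0 hmτ
  set p := τ/(2*(m:ℝ)) with hp
  have h2m : (0:ℝ) < 2*m := by positivity
  have hp0 : 0 ≤ p := by positivity
  have hp1 : p ≤ 1 := by rw [hp, div_le_one h2m]; linarith
  set lam := ε/6 with hlam
  set B := (1-ε/4)*(τ/2) with hB
  have hlam0 : 0 < lam := by positivity
  have step1 : ∑ t ∈ Finset.range (m+1), (if (t:ℝ) ≤ B then binomPMF m p t else 0)
      ≤ ∑ t ∈ Finset.range (m+1), Real.exp (lam*(B - (t:ℝ))) * binomPMF m p t := by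
    apply Finset.sum_le_sum
    intro t _
    split_ifs with h
    · have h1 : 1 ≤ Real.exp (lam*(B-(t:ℝ))) :=
        Real.one_le_exp (by nlinarith)
      exact le_mul_of_one_le_left (binom_nonneg hp0 hp1 t) h1
    · exact mul_nonneg (Real.exp_pos _).le (binom_nonneg hp0 hp1 t)
  have step2 : ∑ t ∈ Finset.range (m+1), Real.exp (lam*(B - (t:ℝ))) * binomPMF m p t
      = Real.exp (lam*B) * (p * Real.exp (-lam) + (1-p)) ^ m := by
    rw [← binom_mgf m p (Real.exp (-lam)), Finset.mul_sum]
    apply Finset.sum_congr rfl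
    intro t _
    have hh : Real.exp (lam*(B-(t:ℝ))) = Real.exp (lam*B) * Real.exp (-lam) ^ t := by
      rw [← Real.exp_nat_mul, ← Real.exp_add]; congr 1; ring
    rw [hh]; ring
  have hbase : p * Real.exp (-lam) + (1-p) ≤ Real.exp (p*(Real.exp (-lam) - 1)) := by
    have := Real.add_one_le_exp (p*(Real.exp (-lam) - 1))
    nlinarith
  have hbase0 : 0 ≤ p * Real.exp (-lam) + (1-p) :=
    add_nonneg (mul_nonneg hp0 (Real.exp_pos _).le) (by linarith)
  have step3 : (p * Real.exp (-lam) + (1-p)) ^ m ≤ Real.exp ((m:ℝ)*(p*(Real.exp (-lam) - 1))) := by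
    calc (p * Real.exp (-lam) + (1-p)) ^ m ≤ (Real.exp (p*(Real.exp (-lam) - 1))) ^ m :=
          pow_le_pow_left₀ hbase0 hbase m
    _ = Real.exp ((m:ℝ)*(p*(Real.exp (-lam) - 1))) := (Real.exp_nat_mul _ m).symm
  have hmp : (m:ℝ) * p = τ/2 := by
    rw [hp]; field_simp
  have hquad := exp_quad (x := -lam) (by rw [abs_neg, hlam, abs_of_pos (by positivity)]; linarith)
  have hexpo : (m:ℝ)*(p*(Real.exp (-lam) - 1)) + lam*B ≤ -L := by
    have h7 : (m:ℝ)*(p*(Real.exp (-lam) - 1)) = (τ/2)*(Real.exp (-lam)) - τ/2 := by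
      rw [← mul_assoc, hmp]; ring
    have hkey : (τ/2)*(Real.exp (-lam)) ≤ (τ/2)*(1 + (-lam) + (3/4)*(-lam)^2) :=
      mul_le_mul_of_nonneg_left hquad (by linarith)
    rw [h7, hB, hlam]
    rw [hlam] at hkey
    nlinarith [hkey, hL96, hτ0]
  calc ∑ t ∈ Finset.range (m+1), (if (t:ℝ) ≤ B then binomPMF m p t else 0)
      ≤ Real.exp (lam*B) * (p * Real.exp (-lam) + (1-p)) ^ m := by rw [← step2]; exact step1
  _ ≤ Real.exp (lam*B) * Real.exp ((m:ℝ)*(p*(Real.exp (-lam) - 1))) :=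
      mul_le_mul_of_nonneg_left step3 (Real.exp_pos _).le
  _ = Real.exp ((m:ℝ)*(p*(Real.exp (-lam) - 1)) + lam*B) := by rw [← Real.exp_add]; ring_nf
  _ ≤ Real.exp (-L) := Real.exp_le_exp.mpr hexpo

end tails


noncomputable def badFn (ε τ : ℝ) (m : ℕ) (t : ℕ) : ℝ :=
  (if (t:ℝ) ≤ (1-ε/4)*(τ/2) then binomPMF m (τ/(2*(m:ℝ))) t else 0) +
  (if (1+ε/4)*(τ/2) < (t:ℝ) then binomPMF m (τ/(2*(m:ℝ))) t else 0)

lemma badFn_nonneg {ε τ : ℝ} {m : ℕ} (hp0 : 0 ≤ τ/(2*(m:ℝ))) (hp1 : τ/(2*(m:ℝ)) ≤ 1) (t : ℕ) :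
    0 ≤ badFn ε τ m t := by
  unfold badFn
  have := binom_nonneg (m := m) hp0 hp1 t
  split_ifs <;> simp <;> linarith

lemma le_badFn_low {ε τ : ℝ} {m : ℕ} (hp0 : 0 ≤ τ/(2*(m:ℝ))) (hp1 : τ/(2*(m:ℝ)) ≤ 1)
    {t : ℕ} (h : (t:ℝ) ≤ (1-ε/4)*(τ/2)) :
    binomPMF m (τ/(2*(m:ℝ))) t ≤ badFn ε τ m t := by
  unfold badFn
  rw [if_pos h]
  have : (0:ℝ) ≤ if (1+ε/4)*(τ/2) < (t:ℝ) then binomPMF m (τ/(2*(m:ℝ))) t else 0 := by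
    split_ifs
    · exact binom_nonneg hp0 hp1 t
    · exact le_refl 0
  linarith

lemma le_badFn_high {ε τ : ℝ} {m : ℕ} (hp0 : 0 ≤ τ/(2*(m:ℝ))) (hp1 : τ/(2*(m:ℝ)) ≤ 1)
    {t : ℕ} (h : (1+ε/4)*(τ/2) < (t:ℝ)) :
    binomPMF m (τ/(2*(m:ℝ))) t ≤ badFn ε τ m t := by
  unfold badFn
  rw [if_pos h]
  have : (0:ℝ) ≤ if (t:ℝ) ≤ (1-ε/4)*(τ/2) then binomPMF m (τ/(2*(m:ℝ))) t else 0 := by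
    split_ifs
    · exact binom_nonneg hp0 hp1 t
    · exact le_refl 0
  linarith

lemma badFn_sum {ε τ L δ : ℝ} {m : ℕ}
    (hε0 : 0 < ε) (hε1 : ε < 1) (h64 : 64 ≤ ε * τ) (hmτ : τ < m)
    (hL96 : τ * ε^2 = 96 * L) (hLδ : Real.exp (-L) = δ/2) :
    ∑ t ∈ Finset.range (m+1), badFn ε τ m t ≤ δ := by
  unfold badFn
  rw [Finset.sum_add_distrib]
  have h1 := tail_low hε0 hε1 h64 hmτ hL96
  have h2 := tail_high hε0 hε1 h64 hmτ hL96
  rw [hLδ] at h1 h2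
  linarith

/-- (ε, δ)-differential-privacy guarantee of the large-batch regime (`m > τ`) of the
    shuffle-model binary summation mechanism: with noise `B ~ Binomial(m, τ/(2m))`,
    the output distributions `k + B` and `(k+1) + B` are (ε, δ)-close on every event. -/
theorem large_batch_privacy
    (ε δ : ℝ) (hε : ε ∈ Set.Ioo (0:ℝ) 1) (hδ : δ ∈ Set.Ioo (0:ℝ) 1)
    (L τ : ℝ) (hL : L = Real.log (2 / δ)) (hτ : τ = 96 * L / ε ^ 2)
    (m : ℕ) (hmτ : τ < (m : ℝ)) :
    ∀ (k : ℕ) (F : Set ℕ),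
      (∑' t : ℕ, Set.indicator {t | k + t ∈ F} (binomPMF m (τ / (2 * m))) t)
        ≤ Real.exp ε *
            (∑' t : ℕ, Set.indicator {t | k + 1 + t ∈ F} (binomPMF m (τ / (2 * m))) t)
          + δ ∧
      (∑' t : ℕ, Set.indicator {t | k + 1 + t ∈ F} (binomPMF m (τ / (2 * m))) t)
        ≤ Real.exp ε *
            (∑' t : ℕ, Set.indicator {t | k + t ∈ F} (binomPMF m (τ / (2 * m))) t)
          + δ := by
  obtain ⟨hε0, hε1⟩ := hε
  obtain ⟨hδ0, hδ1⟩ := hδ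
  have hlog2 : (0.6931471803:ℝ) < Real.log 2 := Real.log_two_gt_d9
  have hLlog : Real.log 2 ≤ L := by
    rw [hL]
    apply Real.log_le_log (by norm_num)
    rw [le_div_iff₀ hδ0]
    nlinarith
  have hL0 : 0 < L := by linarith
  have hτ0 : 0 < τ := by rw [hτ]; positivity
  have h64 : (64:ℝ) ≤ ε * τ := by
    rw [hτ]
    have he : ε * (96 * L / ε^2) = 96 * L / ε := by
      field_simp
    rw [he, le_div_iff₀ hε0]
    nlinarith
  have hL96 : τ * ε^2 = 96 * L := by
    rw [hτ]; field_simp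
  have hLδ : Real.exp (-L) = δ/2 := by
    rw [hL, Real.exp_neg, Real.exp_log (by positivity), inv_div]
  have hm0 : 0 < (m:ℝ) := lt_trans hτ0 hmτ
  have h2m : (0:ℝ) < 2*m := by positivity
  have hp0 : 0 ≤ τ/(2*(m:ℝ)) := by positivity
  have hp1 : τ/(2*(m:ℝ)) ≤ 1 := by rw [div_le_one h2m]; linarith
  have hPnn : ∀ t, 0 ≤ binomPMF m (τ/(2*(m:ℝ))) t := binom_nonneg hp0 hp1
  intro k F
  classical
  set P : ℕ → ℝ := binomPMF m (τ/(2*(m:ℝ))) with hP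
  set g : ℕ → ℝ := Set.indicator {t | k + t ∈ F} P with hg
  set h : ℕ → ℝ := Set.indicator {t | k + 1 + t ∈ F} P with hh
  have hgnn : ∀ t, 0 ≤ g t := fun t => Set.indicator_nonneg (fun a _ => hPnn a) t
  have hhnn : ∀ t, 0 ≤ h t := fun t => Set.indicator_nonneg (fun a _ => hPnn a) t
  have hg_le : ∀ t, g t ≤ P t := by
    intro t
    by_cases hm : t ∈ {t | k + t ∈ F}
    · rw [hg, Set.indicator_of_mem hm]
    · rw [hg, Set.indicator_of_notMem hm]; exact hPnn t
  have hzero : ∀ t, m < t → P t = 0 := fun t ht => binom_zero _ ht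
  have hgzero : ∀ t, m < t → g t = 0 := by
    intro t ht
    by_cases hm : t ∈ {t | k + t ∈ F}
    · rw [hg, Set.indicator_of_mem hm]; exact hzero t ht
    · rw [hg, Set.indicator_of_notMem hm]
  have hhzero : ∀ t, m < t → h t = 0 := by
    intro t ht
    by_cases hm : t ∈ {t | k + 1 + t ∈ F}
    · rw [hh, Set.indicator_of_mem hm]; exact hzero t ht
    · rw [hh, Set.indicator_of_notMem hm]
  have hTg : (∑' t : ℕ, g t) = ∑ t ∈ Finset.range (m+1), g t := by
    apply tsum_eq_sum
    intro t ht
    exact hgzero t (by simp [Finset.mem_range] at ht; omega)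
  have hTh : (∑' t : ℕ, h t) = ∑ t ∈ Finset.range (m+1), h t := by
    apply tsum_eq_sum
    intro t ht
    exact hhzero t (by simp [Finset.mem_range] at ht; omega)
  have hbadnn := badFn_nonneg (ε := ε) (τ := τ) hp0 hp1
  have hbadsum : ∑ t ∈ Finset.range (m+1), badFn ε τ m t ≤ δ :=
    badFn_sum hε0 hε1 h64 hmτ hL96 hLδ
  -- per-term inequalities
  have main1 : ∀ s : ℕ, g (s+1) ≤ Real.exp ε * h s + badFn ε τ m (s+1) := by
    intro s
    by_cases hF : k + 1 + s ∈ F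
    · have hmem : (s+1) ∈ {t | k + t ∈ F} := by
        show k + (s+1) ∈ F
        rwa [show k+(s+1) = k+1+s from by omega]
      have hmem2 : s ∈ {t | k + 1 + t ∈ F} := hF
      have hgv : g (s+1) = P (s+1) := by
        rw [hg]; exact Set.indicator_of_mem hmem P
      have hhv : h s = P s := by
        rw [hh]; exact Set.indicator_of_mem hmem2 P
      rw [hgv, hhv]
      by_cases hgood : ((1-ε/4)*(τ/2) - 1 ≤ (s:ℝ) ∧ (s:ℝ) ≤ (1+ε/4)*(τ/2))
      · have hr := ratio_up hε0 hε1 h64 hmτ hgood.1 hgood.2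
        have := hbadnn (s+1)
        rw [hP]
        linarith
      · push_neg at hgood
        have hb : P (s+1) ≤ badFn ε τ m (s+1) := by
          by_cases hlow : (s:ℝ) < (1-ε/4)*(τ/2) - 1
          · exact le_badFn_low hp0 hp1 (by push_cast; linarith)
          · push_neg at hlow
            have := hgood hlow
            exact le_badFn_high hp0 hp1 (by push_cast; linarith)
        have := mul_nonneg (Real.exp_pos ε).le (hPnn s)
        rw [hP]
        linarith
    · have hnmem : (s+1) ∉ {t | k + t ∈ F} := by
        intro hmem
        exact hF ((show k+(s+1) = k+1+s from by omega) ▸ (hmem : k + (s+1) ∈ F))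
      have hgv : g (s+1) = 0 := by
        rw [hg]; exact Set.indicator_of_notMem hnmem P
      have hhv : h s = 0 := by
        rw [hh]; exact Set.indicator_of_notMem (s := {t | k + 1 + t ∈ F}) hF P
      rw [hgv, hhv]
      have := hbadnn (s+1)
      linarith
  have main2 : ∀ s : ℕ, h s ≤ Real.exp ε * g (s+1) + badFn ε τ m s := by
    intro s
    by_cases hF : k + 1 + s ∈ F
    · have hmem : (s+1) ∈ {t | k + t ∈ F} := by
        show k + (s+1) ∈ F
        rwa [show k+(s+1) = k+1+s from by omega]
      have hmem2 : s ∈ {t | k + 1 + t ∈ F} := hF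
      have hgv : g (s+1) = P (s+1) := by
        rw [hg]; exact Set.indicator_of_mem hmem P
      have hhv : h s = P s := by
        rw [hh]; exact Set.indicator_of_mem hmem2 P
      rw [hgv, hhv]
      by_cases hgood : ((1-ε/4)*(τ/2) - 1 ≤ (s:ℝ) ∧ (s:ℝ) ≤ (1+ε/4)*(τ/2))
      · have hr := ratio_down hε0 hε1 h64 hmτ hgood.1 hgood.2
        have := hbadnn s
        rw [hP]
        linarith
      · push_neg at hgood
        have hb : P s ≤ badFn ε τ m s := by
          by_cases hlow : (s:ℝ) < (1-ε/4)*(τ/2) - 1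
          · exact le_badFn_low hp0 hp1 (by linarith)
          · push_neg at hlow
            have := hgood hlow
            exact le_badFn_high hp0 hp1 (by linarith)
        have := mul_nonneg (Real.exp_pos ε).le (hPnn (s+1))
        rw [hP]
        linarith
    · have hhv : h s = 0 := by
        rw [hh]; exact Set.indicator_of_notMem (s := {t | k + 1 + t ∈ F}) hF P
      rw [hhv]
      have h1 := hbadnn s
      have h2 := mul_nonneg (Real.exp_pos ε).le (hgnn (s+1))
      linarith
  constructor
  · -- first direction
    rw [hTg, hTh]
    have e1 : ∑ t ∈ Finset.range (m+1), g t
        = ∑ s ∈ Finset.range m, g (s+1) + g 0 := Finset.sum_range_succ' g m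
    have e2 : ∑ s ∈ Finset.range m, g (s+1)
        ≤ ∑ s ∈ Finset.range m, (Real.exp ε * h s + badFn ε τ m (s+1)) :=
      Finset.sum_le_sum (fun s _ => main1 s)
    have e3 : ∑ s ∈ Finset.range m, (Real.exp ε * h s + badFn ε τ m (s+1))
        = Real.exp ε * (∑ s ∈ Finset.range m, h s) + ∑ s ∈ Finset.range m, badFn ε τ m (s+1) := by
      rw [Finset.sum_add_distrib, Finset.mul_sum]
    have e4 : g 0 ≤ badFn ε τ m 0 := by
      have h0 : ((0:ℕ):ℝ) ≤ (1-ε/4)*(τ/2) := by push_cast; nlinarith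
      calc g 0 ≤ P 0 := hg_le 0
      _ ≤ badFn ε τ m 0 := le_badFn_low hp0 hp1 h0
    have e5 : ∑ s ∈ Finset.range m, badFn ε τ m (s+1) + badFn ε τ m 0
        = ∑ t ∈ Finset.range (m+1), badFn ε τ m t := (Finset.sum_range_succ' _ m).symm
    have e6 : ∑ s ∈ Finset.range m, h s ≤ ∑ s ∈ Finset.range (m+1), h s := by
      apply Finset.sum_le_sum_of_subset_of_nonneg
      · exact Finset.range_subset_range.2 (Nat.le_succ m)
      · intro t _ _; exact hhnn t
    have e7 : Real.exp ε * (∑ s ∈ Finset.range m, h s)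
        ≤ Real.exp ε * (∑ s ∈ Finset.range (m+1), h s) :=
      mul_le_mul_of_nonneg_left e6 (Real.exp_pos ε).le
    linarith
  · -- second direction
    rw [hTg, hTh]
    have e1 : ∑ s ∈ Finset.range (m+1), h s
        ≤ ∑ s ∈ Finset.range (m+1), (Real.exp ε * g (s+1) + badFn ε τ m s) :=
      Finset.sum_le_sum (fun s _ => main2 s)
    have e2 : ∑ s ∈ Finset.range (m+1), (Real.exp ε * g (s+1) + badFn ε τ m s)
        = Real.exp ε * (∑ s ∈ Finset.range (m+1), g (s+1)) + ∑ s ∈ Finset.range (m+1), badFn ε τ m s := by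
      rw [Finset.sum_add_distrib, Finset.mul_sum]
    have e3 : ∑ s ∈ Finset.range (m+1), g (s+1) ≤ ∑ t ∈ Finset.range (m+1), g t := by
      have hsucc : ∑ t ∈ Finset.range (m+2), g t
          = ∑ s ∈ Finset.range (m+1), g (s+1) + g 0 := Finset.sum_range_succ' g (m+1)
      have hlast : ∑ t ∈ Finset.range (m+2), g t
          = ∑ t ∈ Finset.range (m+1), g t + g (m+1) := Finset.sum_range_succ g (m+1)
      have hg0 := hgnn 0
      have hgm1 : g (m+1) = 0 := hgzero (m+1) (Nat.lt_succ_self m)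
      linarith
    have e4 : Real.exp ε * (∑ s ∈ Finset.range (m+1), g (s+1))
        ≤ Real.exp ε * (∑ t ∈ Finset.range (m+1), g t) :=
      mul_le_mul_of_nonneg_left e3 (Real.exp_pos ε).le
    linarith
end
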